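/- arXiv:2305.10900 — 15 statements merged into one kernel-verified Lean document; each statement's English description precedes it below -/
import Mathlib

section
/- Generalized Combinatorial Nullstellensatz (Lasoń / Tao–Vu). Let K be a commutative integral domain, f a polynomial in n variables over K, and S_1,…,S_n finite subsets of K. If d = (d_1,…,d_n) is a maximal monomial of f and |S_i| > d_i for all i = 1,…,n, then there exists a tuple (x_1,…,x_n) with x_i ∈ S_i for all i such that f(x_1,…,x_n) ≠ 0. -/
open Polynomial in
private theorem gcn_aux (n : ℕ) : ∀ {K : Type*} [CommRing K] [IsDomain K]
    (f : MvPolynomial (Fin n) K) (S : Fin n → Finset K) (d : Fin n →₀ ℕ),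
    d ∈ f.support →
    (∀ a ∈ f.support, a ≠ d → ¬ (∀ i, d i ≤ a i)) →
    (∀ i, d i < (S i).card) →
    ∃ x : Fin n → K, (∀ i, x i ∈ S i) ∧ MvPolynomial.eval x f ≠ 0 := by
  induction n with
  | zero =>
    intro K _ _ f S d hd hmax hS
    obtain ⟨c, rfl⟩ := MvPolynomial.C_surjective (Fin 0) f
    refine ⟨fun i => i.elim0, fun i => i.elim0, ?_⟩
    have hc : c ≠ 0 := by
      rintro rfl
      simp at hd
    simpa using hc
  | succ n ih =>
    intro K _ _ f S d hd hmax hS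
    classical
    set m := (S 0).card with hm
    have hm0 : 0 < m := lt_of_le_of_lt (Nat.zero_le _) (hS 0)
    have hdm : d 0 < m := hS 0
    set g : K[X] := ∏ s ∈ S 0, (X - C s) with hgdef
    have hg : g.Monic := monic_prod_of_monic _ _ fun s _ => monic_X_sub_C s
    have hgdeg : g.natDegree = m := by
      rw [hgdef, natDegree_prod_of_monic _ _ fun s _ => monic_X_sub_C s]
      simp [hm]
    have hgeval : ∀ s ∈ S 0, g.eval s = 0 := by
      intro s hs
      rw [hgdef, eval_prod]
      exact Finset.prod_eq_zero hs (by simp)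
    set R : ℕ → K[X] := fun k => X ^ k %ₘ g with hRdef
    have hRdeg : ∀ k, (R k).natDegree < m := by
      intro k
      rcases eq_or_ne (R k) 0 with h | h
      · simpa [h] using hm0
      · rw [← hgdeg]
        exact natDegree_lt_natDegree h (degree_modByMonic_lt _ hg)
    have hRself : ∀ k, k < m → R k = X ^ k := by
      intro k hk
      rw [hRdef]
      refine (modByMonic_eq_self_iff hg).2 ?_
      rw [degree_X_pow, degree_eq_natDegree hg.ne_zero, hgdeg]
      exact_mod_cast hk
    have hReval : ∀ k, ∀ s ∈ S 0, (R k).eval s = s ^ k := by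
      intro k s hs
      have h1 : R k = X ^ k - g * (X ^ k /ₘ g) := modByMonic_eq_sub_mul_div _ g
      rw [h1]
      simp [hgeval s hs]
    have hka : ∀ a0 k, k ∈ (R a0).support → k < m ∧ (k = a0 ∨ m ≤ a0) := by
      intro a0 k hk
      by_cases h : a0 < m
      · rw [hRself a0 h, Polynomial.support_X_pow] at hk
        have hke : k = a0 := Finset.mem_singleton.1 hk
        exact ⟨hke ▸ h, Or.inl hke⟩
      · exact ⟨lt_of_le_of_lt ((R a0).le_natDegree_of_mem_supp k hk) (hRdeg a0),
          Or.inr (le_of_not_gt h)⟩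
    have hupd : ∀ (a : Fin (n+1) →₀ ℕ) (k : ℕ) (j : Fin (n+1)),
        (a.update 0 k) j = if j = 0 then k else a j := by
      intro a k j
      rw [Finsupp.coe_update]
      exact Function.update_apply _ _ _ _
    set F : MvPolynomial (Fin (n+1)) K := ∑ a ∈ f.support, ∑ k ∈ (R (a 0)).support,
      MvPolynomial.monomial (a.update 0 k) (f.coeff a * (R (a 0)).coeff k) with hFdef
    have hFcoeff : ∀ b, F.coeff b = ∑ a ∈ f.support, ∑ k ∈ (R (a 0)).support,
        if a.update 0 k = b then f.coeff a * (R (a 0)).coeff k else 0 := by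
      intro b
      rw [hFdef, MvPolynomial.coeff_sum]
      refine Finset.sum_congr rfl fun a _ => ?_
      rw [MvPolynomial.coeff_sum]
      exact Finset.sum_congr rfl fun k _ => MvPolynomial.coeff_monomial _ _ _
    have hFd : F.coeff d = f.coeff d := by
      rw [hFcoeff, Finset.sum_eq_single_of_mem d hd]
      · rw [hRself (d 0) hdm, Polynomial.support_X_pow, Finset.sum_singleton,
          Finsupp.update_self, if_pos rfl, Polynomial.coeff_X_pow, if_pos rfl, mul_one]
      · intro a ha hne
        refine Finset.sum_eq_zero fun k hk => ?_
        rw [if_neg]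
        intro hb
        have hj : ∀ j : Fin (n+1), j ≠ 0 → a j = d j := by
          intro j hj0
          have := DFunLike.congr_fun hb j
          rwa [hupd, if_neg hj0] at this
        have hk0 : k = d 0 := by
          have := DFunLike.congr_fun hb 0
          rwa [hupd, if_pos rfl] at this
        rcases (hka (a 0) k hk).2 with h | h
        · apply hne
          ext j
          by_cases hj0 : j = 0
          · rw [hj0, ← h, hk0]
          · exact hj j hj0
        · refine hmax a ha hne fun j => ?_
          by_cases hj0 : j = 0
          · rw [hj0]
            exact le_of_lt (lt_of_lt_of_le hdm h)
          · rw [hj j hj0]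
    have hmem : ∀ b, b ∈ F.support → ∃ a ∈ f.support, ∃ k ∈ (R (a 0)).support,
        a.update 0 k = b := by
      intro b hb
      have hb' : F.coeff b ≠ 0 := MvPolynomial.mem_support_iff.1 hb
      rw [hFcoeff] at hb'
      obtain ⟨a, ha, h1⟩ := Finset.exists_ne_zero_of_sum_ne_zero hb'
      obtain ⟨k, hk, h2⟩ := Finset.exists_ne_zero_of_sum_ne_zero h1
      refine ⟨a, ha, k, hk, ?_⟩
      by_contra h
      rw [if_neg h] at h2
      exact h2 rfl
    have hdeg0 : F.degreeOf 0 < m := by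
      rw [MvPolynomial.degreeOf_lt_iff hm0]
      intro b hb
      obtain ⟨a, ha, k, hk, rfl⟩ := hmem b hb
      rw [hupd, if_pos rfl]
      exact (hka (a 0) k hk).1
    set P := MvPolynomial.finSuccEquiv K n F with hPdef
    have hcc : ∀ (b : Fin n →₀ ℕ) (i : ℕ), (P.coeff i).coeff b = F.coeff (b.cons i) :=
      fun b i => MvPolynomial.finSuccEquiv_coeff_coeff b F i
    have hd' : Finsupp.tail d ∈ (P.coeff (d 0)).support := by
      rw [MvPolynomial.mem_support_iff, hcc, Finsupp.cons_tail, hFd]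
      exact MvPolynomial.mem_support_iff.1 hd
    have hmax' : ∀ b ∈ (P.coeff (d 0)).support, b ≠ Finsupp.tail d →
        ¬ (∀ i, Finsupp.tail d i ≤ b i) := by
      intro b hb hne hle
      have hbF : (b.cons (d 0)) ∈ F.support := by
        rw [MvPolynomial.mem_support_iff, ← hcc]
        exact MvPolynomial.mem_support_iff.1 hb
      obtain ⟨a, ha, k, hk, hab⟩ := hmem _ hbF
      have hk0 : k = d 0 := by
        have := DFunLike.congr_fun hab 0
        rwa [hupd, if_pos rfl, Finsupp.cons_zero] at this
      have ha0 : d 0 ≤ a 0 := by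
        rcases (hka (a 0) k hk).2 with h | h
        · rw [← h, hk0]
        · exact le_of_lt (lt_of_lt_of_le hdm h)
      have hsucc : ∀ j : Fin n, a j.succ = b j := by
        intro j
        have := DFunLike.congr_fun hab j.succ
        rwa [hupd, if_neg (Fin.succ_ne_zero j), Finsupp.cons_succ] at this
      have hane : a ≠ d := by
        intro h
        apply hne
        ext j
        rw [Finsupp.tail_apply, ← h, hsucc j]
      refine hmax a ha hane fun j => ?_
      rcases Fin.eq_zero_or_eq_succ j with rfl | ⟨i, rfl⟩
      · exact ha0
      · rw [hsucc i, ← Finsupp.tail_apply]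
        exact hle i
    obtain ⟨x', hx', hgx'⟩ := ih (P.coeff (d 0)) (fun i => S i.succ) (Finsupp.tail d) hd' hmax'
      (fun i => by rw [Finsupp.tail_apply]; exact hS i.succ)
    set h : K[X] := P.map (MvPolynomial.eval x') with hhdef
    have hh0 : h ≠ 0 := by
      intro hz
      apply hgx'
      have : h.coeff (d 0) = 0 := by rw [hz]; simp
      rwa [hhdef, Polynomial.coeff_map] at this
    have hhdeg : h.natDegree < m := by
      refine lt_of_le_of_lt Polynomial.natDegree_map_le ?_
      rw [hPdef, MvPolynomial.natDegree_finSuccEquiv]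
      exact hdeg0
    have hex : ∃ s ∈ S 0, h.eval s ≠ 0 := by
      by_contra hcon
      push_neg at hcon
      exact hh0 (Polynomial.eq_zero_of_natDegree_lt_card_of_eval_eq_zero' h (S 0) hcon
        (hm ▸ hhdeg))
    obtain ⟨s, hs, hhs⟩ := hex
    refine ⟨Fin.cons s x', ?_, ?_⟩
    · intro i
      rcases Fin.eq_zero_or_eq_succ i with rfl | ⟨j, rfl⟩
      · simpa using hs
      · simpa using hx' j
    · have hevF : MvPolynomial.eval (Fin.cons s x') F = h.eval s := by
        rw [MvPolynomial.eval_eq_eval_mv_eval', hhdef, hPdef]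
      have heq : MvPolynomial.eval (Fin.cons s x') F = MvPolynomial.eval (Fin.cons s x') f := by
        conv_rhs => rw [← MvPolynomial.support_sum_monomial_coeff f]
        rw [hFdef, map_sum, map_sum]
        refine Finset.sum_congr rfl fun a ha => ?_
        rw [map_sum]
        have hterm : ∀ c : Fin (n+1) →₀ ℕ, ∀ r : K,
            MvPolynomial.eval (Fin.cons s x') (MvPolynomial.monomial c r)
              = r * ((Fin.cons s x' : Fin (n+1) → K) 0 ^ c 0 *
                ∏ j : Fin n, x' j ^ c j.succ) := by
          intro c r
          rw [MvPolynomial.eval_monomial, Finsupp.prod_pow, Fin.prod_univ_succ]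
          simp [Fin.cons_succ]
        have hQ : ∀ k, ∏ j : Fin n, x' j ^ ((a.update 0 k) j.succ) = ∏ j : Fin n, x' j ^ a j.succ := by
          intro k
          refine Finset.prod_congr rfl fun j _ => ?_
          rw [hupd, if_neg (Fin.succ_ne_zero j)]
        have hsum : ∑ k ∈ (R (a 0)).support, (R (a 0)).coeff k * s ^ k = s ^ (a 0) := by
          have := hReval (a 0) s hs
          rwa [Polynomial.eval_eq_sum, Polynomial.sum_def] at this
        calc ∑ k ∈ (R (a 0)).support, MvPolynomial.eval (Fin.cons s x')
              (MvPolynomial.monomial (a.update 0 k) (f.coeff a * (R (a 0)).coeff k))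
            = ∑ k ∈ (R (a 0)).support, ((R (a 0)).coeff k * s ^ k) *
              (f.coeff a * ∏ j : Fin n, x' j ^ a j.succ) := by
              refine Finset.sum_congr rfl fun k _ => ?_
              rw [hterm, hQ, hupd, if_pos rfl, Fin.cons_zero]
              ring
          _ = s ^ (a 0) * (f.coeff a * ∏ j : Fin n, x' j ^ a j.succ) := by
              rw [← Finset.sum_mul, hsum]
          _ = MvPolynomial.eval (Fin.cons s x') (MvPolynomial.monomial a (f.coeff a)) := by
              rw [hterm, Fin.cons_zero]
              ring
      rw [← heq, hevF]
      exact hhs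

/-- Generalized Combinatorial Nullstellensatz (Lasoń / Tao–Vu). -/
theorem generalized_combinatorial_nullstellensatz
    {K : Type*} [CommRing K] [IsDomain K] {n : ℕ}
    (f : MvPolynomial (Fin n) K) (S : Fin n → Finset K) (d : Fin n →₀ ℕ)
    (hd : d ∈ f.support)
    (hmax : ∀ a ∈ f.support, a ≠ d → ¬ (∀ i, d i ≤ a i))
    (hS : ∀ i, d i < (S i).card) :
    ∃ x : Fin n → K, (∀ i, x i ∈ S i) ∧ MvPolynomial.eval x f ≠ 0 :=
  gcn_aux n f S d hd hmax hS
end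

section
/- Generalized Schwartz–Zippel Lemma (quantitative form). Let K be a commutative integral domain, f a polynomial in n variables over K, and S_1,…,S_n finite subsets of K. If d = (d_1,…,d_n) is the lexicographically largest monomial of f and |S_i| > d_i for all i, then the number of tuples (x_1,…,x_n) ∈ S_1 × ⋯ × S_n with f(x_1,…,x_n) ≠ 0 is at least (|S_1| − d_1)(|S_2| − d_2)⋯(|S_n| − d_n). -/
open Finset

private lemma lex_zero_le {n : ℕ} {a d : Fin (n+1) → ℕ}
    (h : toLex a ≤ toLex d) : a 0 ≤ d 0 := by
  by_contra hlt
  push_neg at hlt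
  have : toLex d < toLex a := ⟨0, fun j hj => absurd hj (Fin.not_lt_zero j), hlt⟩
  exact absurd (lt_of_le_of_lt h this) (lt_irrefl _)

private lemma lex_cons_le_cons {n : ℕ} {i : ℕ} {a b : Fin n → ℕ}
    (h : toLex (Fin.cons i a : Fin (n+1) → ℕ) ≤ toLex (Fin.cons i b : Fin (n+1) → ℕ)) :
    toLex a ≤ toLex b := by
  rcases eq_or_lt_of_le h with heq | hlt
  · have : (Fin.cons i a : Fin (n+1) → ℕ) = Fin.cons i b := congrArg ofLex heq
    have : a = b := by
      funext j
      have := congrFun this j.succ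
      simpa using this
    exact le_of_eq (congrArg toLex this)
  · obtain ⟨j, hj, hlt'⟩ := hlt
    refine le_of_lt ?_
    refine Fin.cases ?_ ?_ j hj hlt'
    · intro _ hlt'
      simp at hlt'
    · intro k hk hlt'
      refine ⟨k, fun m hm => ?_, ?_⟩
      · have := hk m.succ (by simpa using hm)
        simpa using this
      · simpa using hlt'

private lemma coe_finsupp_cons {n : ℕ} (i : ℕ) (m : Fin n →₀ ℕ) :
    ((Finsupp.cons i m : Fin (n+1) →₀ ℕ) : Fin (n+1) → ℕ) = Fin.cons i (m : Fin n → ℕ) := by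
  funext j
  refine Fin.cases ?_ ?_ j
  · simp [Finsupp.cons_zero]
  · intro k; simp [Finsupp.cons_succ]

/-- Generalized Schwartz–Zippel Lemma (quantitative form). -/
theorem generalized_schwartz_zippel
    {K : Type*} [CommRing K] [IsDomain K] [DecidableEq K] {n : ℕ}
    (f : MvPolynomial (Fin n) K) (S : Fin n → Finset K) (d : Fin n →₀ ℕ)
    (hd : d ∈ f.support)
    (hlex : ∀ a ∈ f.support, toLex (a : Fin n → ℕ) ≤ toLex (d : Fin n → ℕ))
    (hS : ∀ i, d i < (S i).card) :
    ∏ i, ((S i).card - d i) ≤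
      ((Fintype.piFinset S).filter fun x => MvPolynomial.eval x f ≠ 0).card := by
  induction n with
  | zero =>
    simp only [Finset.univ_eq_empty, Finset.prod_empty]
    have hf : f ≠ 0 := fun h => by simp [h] at hd
    obtain ⟨r, rfl⟩ := MvPolynomial.C_surjective (Fin 0) f
    have hr : r ≠ 0 := fun h => hf (by simp [h])
    have : (default : Fin 0 → K) ∈
        (Fintype.piFinset S).filter fun x => MvPolynomial.eval x (MvPolynomial.C r) ≠ 0 := by
      simp [Fintype.mem_piFinset, hr]
    exact Finset.card_pos.2 ⟨_, this⟩
  | succ n ih =>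
    set g := MvPolynomial.finSuccEquiv K n f with hg
    set d0 := d 0 with hd0
    set dt := Finsupp.tail d with hdt
    have hcons : Finsupp.cons d0 dt = d := Finsupp.cons_tail d
    set c := g.coeff d0 with hc
    -- the lex-largest monomial of c is dt
    have hdmem : dt ∈ c.support := by
      rw [hc, hg, MvPolynomial.mem_support_coeff_finSuccEquiv, hcons]
      exact hd
    have hdcoe : (d : Fin (n+1) → ℕ) = Fin.cons d0 (dt : Fin n → ℕ) := by
      rw [← hcons, coe_finsupp_cons]
    have hlext : ∀ a ∈ c.support, toLex (a : Fin n → ℕ) ≤ toLex (dt : Fin n → ℕ) := by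
      intro a ha
      rw [hc, hg, MvPolynomial.mem_support_coeff_finSuccEquiv] at ha
      have h := hlex _ ha
      rw [coe_finsupp_cons, hdcoe] at h
      exact lex_cons_le_cons h
    have hSt : ∀ i, dt i < (S i.succ).card := fun i => by
      rw [hdt, Finsupp.tail_apply]; exact hS i.succ
    -- degree bound on g
    have h0 : ∀ a ∈ f.support, (a : Fin (n+1) → ℕ) 0 ≤ d0 :=
      fun a ha => lex_zero_le (hlex a ha)
    have hdeg : g.natDegree ≤ d0 := by
      rw [Polynomial.natDegree_le_iff_coeff_eq_zero]
      intro m hm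
      by_contra hne
      obtain ⟨a, ha⟩ := (MvPolynomial.support_nonempty.2 hne)
      rw [hg, MvPolynomial.mem_support_coeff_finSuccEquiv] at ha
      have := h0 _ ha
      rw [coe_finsupp_cons] at this
      simp only [Fin.cons_zero] at this
      omega
    -- inductive hypothesis applied to c
    set T := (Fintype.piFinset fun i => S i.succ).filter
      fun x => MvPolynomial.eval x c ≠ 0 with hT
    have hTcard : ∏ i, ((S i.succ).card - dt i) ≤ T.card := ih c _ dt hdmem hlext hSt
    -- counting fiberwise
    set A := (Fintype.piFinset S).filter fun x => MvPolynomial.eval x f ≠ 0 with hA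
    have hfib : A.card = ∑ x ∈ Fintype.piFinset fun i => S i.succ,
        (A.filter fun v => Fin.tail v = x).card := by
      refine Finset.card_eq_sum_card_fiberwise fun v hv => ?_
      rw [hA, Finset.mem_coe, Finset.mem_filter] at hv
      rw [Finset.mem_coe, Fintype.mem_piFinset]
      intro i
      exact (Fintype.mem_piFinset.1 hv.1) i.succ
    have hsub : T ⊆ Fintype.piFinset fun i => S i.succ := Finset.filter_subset _ _
    have hstep : ∀ x ∈ T, (S 0).card - d0 ≤ (A.filter fun v => Fin.tail v = x).card := by
      intro x hx
      rw [hT, Finset.mem_filter] at hx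
      obtain ⟨hxU, hxc⟩ := hx
      set p := Polynomial.map (MvPolynomial.eval x) g with hp
      have hpc : p.coeff d0 ≠ 0 := by
        rw [hp, Polynomial.coeff_map]; exact hxc
      have hpdeg : p.natDegree ≤ d0 :=
        le_trans Polynomial.natDegree_map_le hdeg
      have hp0 : p ≠ 0 := fun h => hpc (by simp [h])
      -- roots count
      have hroots : ((S 0).filter fun y => Polynomial.eval y p = 0).card ≤ d0 := by
        have hsub' : ((S 0).filter fun y => Polynomial.eval y p = 0) ⊆ p.roots.toFinset := by
          intro y hy
          rw [Finset.mem_filter] at hy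
          rw [Multiset.mem_toFinset, Polynomial.mem_roots hp0]
          exact hy.2
        calc ((S 0).filter fun y => Polynomial.eval y p = 0).card
            ≤ p.roots.toFinset.card := Finset.card_le_card hsub'
          _ ≤ Multiset.card p.roots := Multiset.toFinset_card_le _
          _ ≤ p.natDegree := Polynomial.card_roots' p
          _ ≤ d0 := hpdeg
      have hgood : (S 0).card - d0 ≤ ((S 0).filter fun y => ¬ Polynomial.eval y p = 0).card := by
        have := Finset.card_filter_add_card_filter_not
          (s := S 0) (p := fun y => Polynomial.eval y p = 0)
        omega
      refine le_trans hgood (Finset.card_le_card_of_injOn (fun y => Fin.cons y x) ?_ ?_)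
      · intro y hy
        rw [Finset.mem_coe, Finset.mem_filter] at hy ⊢
        constructor
        · rw [hA]
          rw [Finset.mem_filter]
          constructor
          · rw [Fintype.mem_piFinset]
            intro i
            refine Fin.cases ?_ ?_ i
            · simpa using hy.1
            · intro k; simpa using (Fintype.mem_piFinset.1 hxU) k
          · rw [MvPolynomial.eval_eq_eval_mv_eval']
            exact hy.2
        · rfl
      · intro y₁ _ y₂ _ h
        have := congrFun h 0
        simpa using this
    -- combine
    have hsum : T.card * ((S 0).card - d0) ≤ A.card := by
      rw [hfib]
      calc T.card * ((S 0).card - d0)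
          = ∑ _x ∈ T, ((S 0).card - d0) := by rw [Finset.sum_const, smul_eq_mul]
        _ ≤ ∑ x ∈ T, (A.filter fun v => Fin.tail v = x).card :=
            Finset.sum_le_sum hstep
        _ ≤ ∑ x ∈ Fintype.piFinset fun i => S i.succ,
              (A.filter fun v => Fin.tail v = x).card :=
            Finset.sum_le_sum_of_subset hsub
    calc ∏ i, ((S i).card - d i)
        = ((S 0).card - d0) * ∏ i : Fin n, ((S i.succ).card - d i.succ) :=
          Fin.prod_univ_succ _
      _ = ((S 0).card - d0) * ∏ i : Fin n, ((S i.succ).card - dt i) := rfl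
      _ ≤ ((S 0).card - d0) * T.card := Nat.mul_le_mul_left _ hTcard
      _ = T.card * ((S 0).card - d0) := Nat.mul_comm _ _
      _ ≤ A.card := hsum
end

section
/- Combinatorial Nullstellensatz (Alon). Let K be a commutative integral domain, f a polynomial in n variables over K, and S_1,…,S_n finite subsets of K. If d = (d_1,…,d_n) is a monomial of f with d_1 + ⋯ + d_n equal to the total degree of f, and |S_i| > d_i for all i = 1,…,n, then there exists a tuple (x_1,…,x_n) with x_i ∈ S_i for all i such that f(x_1,…,x_n) ≠ 0. -/
open MvPolynomial

namespace CombNull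

variable {K : Type*} [CommRing K] {n : ℕ}

private lemma sum_eq (a : Fin n →₀ ℕ) : (∑ j ∈ a.support, a j) = ∑ j, a j :=
  Finset.sum_subset (Finset.subset_univ _) (fun x _ hx => Finsupp.notMem_support_iff.mp hx)

private lemma monomial_split (i : Fin n) (u : Fin n →₀ ℕ) (c : K) :
    (monomial u c : MvPolynomial (Fin n) K) = monomial (u.erase i) c * X i ^ (u i) := by
  rw [X_pow_eq_monomial, monomial_mul, mul_one, Finsupp.erase_add_single]

private lemma aeval_update_monomial (i : Fin n) (s : K) (u : Fin n →₀ ℕ) (c : K) :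
    MvPolynomial.aeval (Function.update X i (MvPolynomial.C s)) (monomial u c)
      = monomial (u.erase i) (c * s ^ u i) := by
  have h0 : MvPolynomial.aeval (Function.update X i (MvPolynomial.C s))
      (monomial (u.erase i) c) = (monomial (u.erase i) c : MvPolynomial (Fin n) K) := by
    rw [aeval_monomial, algebraMap_eq, monomial_eq]
    congr 1
    apply Finsupp.prod_congr
    intro j hj
    have hji : j ≠ i := by
      rw [Finsupp.support_erase] at hj
      exact Finset.ne_of_mem_erase hj
    rw [Function.update_of_ne hji]
  conv_lhs => rw [monomial_split i u c]
  rw [map_mul, map_pow, aeval_X, Function.update_self, h0, ← map_pow, mul_comm,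
    C_mul_monomial, mul_comm]

private lemma coeff_subst_eq_zero (i : Fin n) (s : K) (f : MvPolynomial (Fin n) K)
    (a : Fin n →₀ ℕ) (ha : a i ≠ 0) :
    MvPolynomial.coeff a (MvPolynomial.aeval (Function.update X i (MvPolynomial.C s)) f) = 0 := by
  conv_lhs => rw [f.as_sum, map_sum]
  rw [MvPolynomial.coeff_sum]
  apply Finset.sum_eq_zero
  intro u hu
  rw [aeval_update_monomial, coeff_monomial, if_neg]
  intro h
  apply ha
  rw [← h, Finsupp.erase_same]

private lemma dvd_sub_subst (i : Fin n) (s : K) (f : MvPolynomial (Fin n) K) :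
    (X i - MvPolynomial.C s) ∣
      f - MvPolynomial.aeval (Function.update X i (MvPolynomial.C s)) f := by
  have h : f - MvPolynomial.aeval (Function.update X i (MvPolynomial.C s)) f
      = ∑ u ∈ f.support, ((monomial u (coeff u f) : MvPolynomial (Fin n) K)
          - MvPolynomial.aeval (Function.update X i (MvPolynomial.C s))
              (monomial u (coeff u f))) := by
    rw [Finset.sum_sub_distrib, ← map_sum, ← f.as_sum]
  rw [h]
  apply Finset.dvd_sum
  intro u hu
  rw [aeval_update_monomial]
  have h2 : (monomial (u.erase i) (coeff u f * s ^ u i) : MvPolynomial (Fin n) K)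
      = monomial (u.erase i) (coeff u f) * (MvPolynomial.C s) ^ (u i) := by
    rw [← map_pow, mul_comm (coeff u f) _, ← C_mul_monomial, mul_comm]
  rw [monomial_split i u (coeff u f), h2, ← mul_sub]
  exact Dvd.dvd.mul_left (sub_dvd_pow_sub_pow _ _ _) _

private lemma eval_subst (i : Fin n) (s : K) (f : MvPolynomial (Fin n) K) (x : Fin n → K) :
    MvPolynomial.eval x (MvPolynomial.aeval (Function.update X i (MvPolynomial.C s)) f)
      = MvPolynomial.eval (Function.update x i s) f := by
  rw [MvPolynomial.aeval_def, eval_eval₂]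
  have h1 : ((MvPolynomial.eval x).comp (algebraMap K (MvPolynomial (Fin n) K)))
      = RingHom.id K := by
    ext a; simp [algebraMap_eq]
  have h2 : (fun j => MvPolynomial.eval x (Function.update X i (MvPolynomial.C s) j))
      = Function.update x i s := by
    funext j
    by_cases hj : j = i
    · subst hj; simp
    · simp [Function.update_of_ne hj]
  rw [h1, h2, eval₂_id]

private lemma cn_base (f : MvPolynomial (Fin n) K) (S : Fin n → Finset K) (d : Fin n →₀ ℕ)
    (hd : d ∈ f.support) (hdeg0 : f.totalDegree = 0) (hS : ∀ i, d i < (S i).card) :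
    ∃ x : Fin n → K, (∀ i, x i ∈ S i) ∧ MvPolynomial.eval x f ≠ 0 := by
  have hall : ∀ m ∈ f.support, ∀ x, m x = 0 := (totalDegree_eq_zero_iff _ f).mp hdeg0
  have hd0 : d = 0 := Finsupp.ext fun j => hall d hd j
  subst hd0
  have hx : ∀ i, ∃ y, y ∈ S i := fun i =>
    Finset.card_pos.mp (Nat.lt_of_le_of_lt (Nat.zero_le _) (hS i))
  choose x hxS using hx
  refine ⟨x, hxS, ?_⟩
  have hsupp : f.support = {(0 : Fin n →₀ ℕ)} := by
    apply Finset.eq_singleton_iff_unique_mem.mpr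
    exact ⟨hd, fun m hm => Finsupp.ext fun j => hall m hm j⟩
  have hf : f = monomial 0 (coeff 0 f) := by
    conv_lhs => rw [f.as_sum, hsupp]
    simp
  rw [hf]
  simpa using MvPolynomial.mem_support_iff.mp hd

private lemma cn_aux [IsDomain K] (N : ℕ) :
    ∀ (f : MvPolynomial (Fin n) K) (S : Fin n → Finset K) (d : Fin n →₀ ℕ),
      f.totalDegree ≤ N → d ∈ f.support → (∑ i, d i) = f.totalDegree →
      (∀ i, d i < (S i).card) →
      ∃ x : Fin n → K, (∀ i, x i ∈ S i) ∧ MvPolynomial.eval x f ≠ 0 := by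
  induction N with
  | zero =>
    intro f S d hN hd hdeg hS
    exact cn_base f S d hd (Nat.le_zero.mp hN) hS
  | succ N ih =>
    intro f S d hN hd hdeg hS
    classical
    by_cases hdeg0 : f.totalDegree = 0
    · exact cn_base f S d hd hdeg0 hS
    -- pick i with d i ≠ 0
    have hex : ∃ i, d i ≠ 0 := by
      by_contra hcon
      push_neg at hcon
      exact hdeg0 (by rw [← hdeg]; exact Finset.sum_eq_zero fun i _ => hcon i)
    obtain ⟨i, hi⟩ := hex
    obtain ⟨s, hs⟩ := Finset.card_pos.mp (Nat.lt_of_le_of_lt (Nat.zero_le _) (hS i))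
    set r := MvPolynomial.aeval (Function.update X i (MvPolynomial.C s)) f with hr
    obtain ⟨g, hg⟩ := dvd_sub_subst i s f
    have hf : f = (X i - MvPolynomial.C s) * g + r := by rw [← hg]; ring
    -- key coefficient identity
    have key : ∀ a : Fin n →₀ ℕ,
        MvPolynomial.coeff (Finsupp.single i 1 + a) f
          = MvPolynomial.coeff a g - s * MvPolynomial.coeff (Finsupp.single i 1 + a) g := by
      intro a
      have hai : ((Finsupp.single i 1 + a : Fin n →₀ ℕ)) i ≠ 0 := by simp
      conv_lhs => rw [hf]
      rw [coeff_add, sub_mul, coeff_sub, coeff_X_mul, coeff_C_mul, hr,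
        coeff_subst_eq_zero i s f _ hai, add_zero]
    -- degree of g is smaller than degree of f
    have hgdeg : g.totalDegree < f.totalDegree := by
      by_contra hle
      push_neg at hle
      have hg0 : g ≠ 0 := by
        rintro rfl
        rw [totalDegree_zero] at hle
        exact hdeg0 (Nat.le_zero.mp hle)
      obtain ⟨m, hm, hmd⟩ := Finset.exists_mem_eq_sup g.support
        (MvPolynomial.support_nonempty.mpr hg0) (fun u => u.sum fun _ e => e)
      have hmd' : g.totalDegree = ∑ j ∈ m.support, m j := hmd
      have hsum : (∑ j ∈ (Finsupp.single i 1 + m : Fin n →₀ ℕ).support, (Finsupp.single i 1 + m : Fin n →₀ ℕ) j)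
          = 1 + g.totalDegree := by
        rw [sum_eq, hmd', sum_eq]
        simp [Finsupp.add_apply, Finset.sum_add_distrib, Finsupp.single_apply]
      have hcf : MvPolynomial.coeff (Finsupp.single i 1 + m) f = 0 := by
        apply coeff_eq_zero_of_totalDegree_lt
        rw [hsum]; omega
      have hcg : MvPolynomial.coeff (Finsupp.single i 1 + m) g = 0 := by
        apply coeff_eq_zero_of_totalDegree_lt
        rw [hsum]; omega
      have hmg : MvPolynomial.coeff m g = 0 := by
        have hk := key m
        rw [hcf, hcg, mul_zero, sub_zero] at hk
        exact hk.symm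
      exact MvPolynomial.mem_support_iff.mp hm hmg
    -- the exponent d' = d - e_i
    set d' : Fin n →₀ ℕ := d - Finsupp.single i 1 with hd'def
    have hdd : Finsupp.single i 1 + d' = d := by
      ext j
      rw [Finsupp.add_apply, hd'def, Finsupp.tsub_apply]
      by_cases hj : j = i
      · rw [hj, Finsupp.single_eq_same]; omega
      · rw [Finsupp.single_eq_of_ne' (Ne.symm hj)]; omega
    have hcd : MvPolynomial.coeff d g = 0 := by
      apply coeff_eq_zero_of_totalDegree_lt
      rw [sum_eq, hdeg]; exact hgdeg
    have hcoeff : MvPolynomial.coeff d' g = MvPolynomial.coeff d f := by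
      have hk := key d'
      rw [hdd] at hk
      rw [hk, hcd, mul_zero, sub_zero]
    have hd's : d' ∈ g.support :=
      MvPolynomial.mem_support_iff.mpr
        (by rw [hcoeff]; exact MvPolynomial.mem_support_iff.mp hd)
    have hsum_dd : (∑ j, d j) = (∑ j, d' j) + 1 := by
      conv_lhs => rw [← hdd]
      simp [Finsupp.add_apply, Finset.sum_add_distrib, Finsupp.single_apply, add_comm]
    have hsum_d' : (∑ j, d' j) = g.totalDegree := by
      have h1 : (∑ j ∈ d'.support, d' j) ≤ g.totalDegree := le_totalDegree hd's
      rw [sum_eq] at h1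
      omega
    set S' := Function.update S i ((S i).erase s) with hS'def
    have hS' : ∀ j, d' j < (S' j).card := by
      intro j
      by_cases hj : j = i
      · rw [hj, hS'def, Function.update_self, Finset.card_erase_of_mem hs]
        have h1 := hS i
        have h2 : d' i = d i - 1 := by
          rw [hd'def, Finsupp.tsub_apply, Finsupp.single_eq_same]
        omega
      · rw [hS'def, Function.update_of_ne hj]
        have h2 : d' j = d j := by
          rw [hd'def, Finsupp.tsub_apply, Finsupp.single_eq_of_ne' (Ne.symm hj)]; omega
        rw [h2]; exact hS j
    obtain ⟨x, hx, hgx⟩ := ih g S' d' (by omega) hd's hsum_d' hS'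
    have hxi : x i ∈ (S i).erase s := by
      have := hx i; rwa [hS'def, Function.update_self] at this
    have hxine : x i ≠ s := (Finset.mem_erase.mp hxi).1
    by_cases hfx : MvPolynomial.eval x f = 0
    · refine ⟨Function.update x i s, fun j => ?_, ?_⟩
      · by_cases hj : j = i
        · subst hj; rw [Function.update_self]; exact hs
        · rw [Function.update_of_ne hj]
          have := hx j; rwa [hS'def, Function.update_of_ne hj] at this
      · rw [← eval_subst i s f x]
        have heq : (x i - s) * MvPolynomial.eval x g + MvPolynomial.eval x r = 0 := by
          rw [← hfx]
          conv_rhs => rw [hf]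
          simp
        intro h0
        rw [h0, add_zero] at heq
        exact (mul_ne_zero (sub_ne_zero.mpr hxine) hgx) heq
    · refine ⟨x, fun j => ?_, hfx⟩
      by_cases hj : j = i
      · subst hj; exact Finset.mem_of_mem_erase hxi
      · have := hx j; rwa [hS'def, Function.update_of_ne hj] at this

end CombNull

/-- Combinatorial Nullstellensatz (Alon). -/
theorem combinatorial_nullstellensatz
    {K : Type*} [CommRing K] [IsDomain K] {n : ℕ}
    (f : MvPolynomial (Fin n) K) (S : Fin n → Finset K) (d : Fin n →₀ ℕ)
    (hd : d ∈ f.support)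
    (hdeg : (∑ i, d i) = f.totalDegree)
    (hS : ∀ i, d i < (S i).card) :
    ∃ x : Fin n → K, (∀ i, x i ∈ S i) ∧ MvPolynomial.eval x f ≠ 0 := by
  exact CombNull.cn_aux f.totalDegree f S d le_rfl hd hdeg hS
end

section
/- Schwartz–Zippel Lemma. Let K be a commutative integral domain, f a nonzero polynomial in n variables over K of total degree d, and S a finite nonempty subset of K. Then the number of tuples (x_1,…,x_n) ∈ S^n with f(x_1,…,x_n) = 0 is at most d · |S|^{n−1}; equivalently, the number of nonzeros is at least |S|^n · (1 − d/|S|). -/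
open Finset MvPolynomial

lemma schwartz_zippel_aux {K : Type*} [CommRing K] [IsDomain K] [DecidableEq K] :
    ∀ (n : ℕ) (f : MvPolynomial (Fin n) K), f ≠ 0 → ∀ S : Finset K,
    ((Fintype.piFinset fun _ : Fin n => S).filter
        fun x => MvPolynomial.eval x f = 0).card * S.card
      ≤ f.totalDegree * S.card ^ n := by
  intro n
  induction n with
  | zero =>
    intro f hf S
    have h : ∀ x : Fin 0 → K, ¬ MvPolynomial.eval x f = 0 := by
      intro x
      rw [eq_C_of_isEmpty f, eval_C]
      intro h0
      exact hf (by rw [eq_C_of_isEmpty f, h0, map_zero])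
    simp [h]
  | succ n ih =>
    intro f hf S
    set p := finSuccEquiv K n f with hp
    have hp0 : p ≠ 0 := by
      rw [hp]
      exact (map_ne_zero_iff _ (finSuccEquiv K n).injective).mpr hf
    set k := p.natDegree with hk
    set c := p.leadingCoeff with hc
    have hc0 : c ≠ 0 := Polynomial.leadingCoeff_ne_zero.mpr hp0
    have hdk : c.totalDegree + k ≤ f.totalDegree := by
      have := totalDegree_coeff_finSuccEquiv_add_le f k
        (by rw [← hp, Polynomial.coeff_natDegree, ← hc]; exact hc0)
      rwa [← hp, Polynomial.coeff_natDegree, ← hc] at this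
    set P := Fintype.piFinset fun _ : Fin n => S with hP
    set A := (Fintype.piFinset fun _ : Fin (n + 1) => S).filter
        (fun x => MvPolynomial.eval x f = 0) with hA
    have hcard : A.card = ∑ s ∈ P, (A.filter fun x => Fin.tail x = s).card := by
      apply Finset.card_eq_sum_card_fiberwise
      intro x hx
      simp only [Finset.mem_coe, hA, Finset.mem_filter] at hx
      rw [hP, Finset.mem_coe, Fintype.mem_piFinset]
      intro i
      exact Fintype.mem_piFinset.mp hx.1 i.succ
    have hfiber : ∀ s ∈ P, (A.filter fun x => Fin.tail x = s).card ≤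
        (S.filter fun a => (p.map (MvPolynomial.eval s)).eval a = 0).card := by
      intro s _
      apply Finset.card_le_card_of_injOn (fun x => x 0)
      · intro x hx
        simp only [Finset.mem_coe, Finset.mem_filter, hA] at hx
        obtain ⟨⟨hx1, hx2⟩, hx3⟩ := hx
        refine Finset.mem_filter.mpr ⟨Fintype.mem_piFinset.mp hx1 0, ?_⟩
        rw [hp, ← eval_eq_eval_mv_eval', ← hx3, Fin.cons_self_tail]
        exact hx2
      · intro x hx y hy hxy
        have hx3 := (Finset.mem_filter.mp hx).2
        have hy3 := (Finset.mem_filter.mp hy).2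
        rw [← Fin.cons_self_tail x, ← Fin.cons_self_tail y, hx3, hy3,
          show x 0 = y 0 from hxy]
    have hT1 : ∀ s ∈ P, MvPolynomial.eval s c ≠ 0 →
        (S.filter fun a => (p.map (MvPolynomial.eval s)).eval a = 0).card ≤ k := by
      intro s _ hsc
      set q := p.map (MvPolynomial.eval s) with hq
      have hq0 : q ≠ 0 := by
        intro h
        apply hsc
        have h2 : q.coeff k = 0 := by rw [h]; simp
        rwa [hq, Polynomial.coeff_map, hk, Polynomial.coeff_natDegree, ← hc] at h2
      calc (S.filter fun a => q.eval a = 0).card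
          ≤ q.roots.toFinset.card := Finset.card_le_card (by
            intro a ha
            rw [Multiset.mem_toFinset, Polynomial.mem_roots hq0]
            exact (Finset.mem_filter.mp ha).2)
        _ ≤ Multiset.card q.roots := Multiset.toFinset_card_le _
        _ ≤ q.natDegree := Polynomial.card_roots' q
        _ ≤ k := Polynomial.natDegree_map_le
    have hsum : A.card ≤ ∑ s ∈ P, (if MvPolynomial.eval s c = 0 then S.card else k) := by
      rw [hcard]
      apply Finset.sum_le_sum
      intro s hs
      split_ifs with h
      · exact le_trans (hfiber s hs)
          (Finset.card_le_card (Finset.filter_subset _ _))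
      · exact le_trans (hfiber s hs) (hT1 s hs h)
    have hsplit : ∑ s ∈ P, (if MvPolynomial.eval s c = 0 then S.card else k)
        = (P.filter fun s => MvPolynomial.eval s c = 0).card * S.card
          + (P.filter fun s => ¬ MvPolynomial.eval s c = 0).card * k := by
      rw [Finset.sum_ite, Finset.sum_const, Finset.sum_const, smul_eq_mul, smul_eq_mul]
    have hT0 : (P.filter fun s => MvPolynomial.eval s c = 0).card * S.card
        ≤ c.totalDegree * S.card ^ n := ih c hc0 S
    have hPcard : P.card = S.card ^ n := by
      simp [hP, Fintype.card_piFinset]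
    have hT1card : (P.filter fun s => ¬ MvPolynomial.eval s c = 0).card ≤ S.card ^ n := by
      rw [← hPcard]
      exact Finset.card_le_card (Finset.filter_subset _ _)
    have key : A.card ≤ c.totalDegree * S.card ^ n + S.card ^ n * k := by
      calc A.card ≤ _ := hsum
        _ = _ := hsplit
        _ ≤ c.totalDegree * S.card ^ n + S.card ^ n * k := by
            gcongr
    calc A.card * S.card
        ≤ (c.totalDegree * S.card ^ n + S.card ^ n * k) * S.card :=
          Nat.mul_le_mul_right _ key
      _ = (c.totalDegree + k) * S.card ^ (n + 1) := by ring
      _ ≤ f.totalDegree * S.card ^ (n + 1) := Nat.mul_le_mul_right _ hdk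

/-- Schwartz–Zippel Lemma. -/
theorem schwartz_zippel
    {K : Type*} [CommRing K] [IsDomain K] [DecidableEq K] {n : ℕ}
    (f : MvPolynomial (Fin n) K) (hf : f ≠ 0) (d : ℕ)
    (hdeg : f.totalDegree = d)
    (S : Finset K) (hS : S.Nonempty) :
    ((Fintype.piFinset fun _ : Fin n => S).filter
        fun x => MvPolynomial.eval x f = 0).card ≤ d * S.card ^ (n - 1) := by
  subst hdeg
  have hS0 : 0 < S.card := Finset.card_pos.mpr hS
  cases n with
  | zero =>
    have h : ∀ x : Fin 0 → K, ¬ MvPolynomial.eval x f = 0 := by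
      intro x
      rw [eq_C_of_isEmpty f, eval_C]
      intro h0
      exact hf (by rw [eq_C_of_isEmpty f, h0, map_zero])
    simp [h]
  | succ m =>
    have h := schwartz_zippel_aux (m + 1) f hf S
    rw [pow_succ, ← mul_assoc] at h
    rw [Nat.succ_sub_one]
    exact Nat.le_of_mul_le_mul_right h hS0
end

section
/- Generalized DeMillo–Lipton–Zippel Theorem. Let K be a commutative integral domain, f a nonzero polynomial in n variables over K, and S_1,…,S_n finite subsets of K. Let d_i be the degree of f in the variable x_i, and assume |S_i| > d_i for all i = 1,…,n. Then the number of tuples (x_1,…,x_n) ∈ S_1 × ⋯ × S_n with f(x_1,…,x_n) ≠ 0 is at least (|S_1| − d_1)(|S_2| − d_2)⋯(|S_n| − d_n). -/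
open MvPolynomial Finset

/-- Generalized DeMillo–Lipton–Zippel Theorem. -/
theorem generalized_demillo_lipton_zippel
    {K : Type*} [CommRing K] [IsDomain K] [DecidableEq K] {n : ℕ}
    (f : MvPolynomial (Fin n) K) (hf : f ≠ 0) (S : Fin n → Finset K)
    (hS : ∀ i, f.degreeOf i < (S i).card) :
    ∏ i, ((S i).card - f.degreeOf i) ≤
      ((Fintype.piFinset S).filter fun x => MvPolynomial.eval x f ≠ 0).card := by
  induction n with
  | zero =>
    simp only [Finset.univ_eq_empty, Finset.prod_empty]
    rw [Nat.one_le_iff_ne_zero, ← Nat.pos_iff_ne_zero, Finset.card_pos]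
    refine ⟨isEmptyElim, Finset.mem_filter.2
      ⟨Fintype.mem_piFinset.2 fun i => isEmptyElim i, ?_⟩⟩
    intro h
    apply hf
    apply (MvPolynomial.isEmptyRingEquiv K (Fin 0)).injective
    rw [map_zero, MvPolynomial.isEmptyRingEquiv_apply]
    rw [MvPolynomial.eq_C_of_isEmpty f, MvPolynomial.eval_C] at h
    exact h
  | succ n ih =>
    set g := MvPolynomial.finSuccEquiv K n f with hg
    set d0 := f.degreeOf 0 with hd0
    have hgne : g ≠ 0 := by
      simpa [hg] using (EmbeddingLike.map_ne_zero_iff (f := (MvPolynomial.finSuccEquiv K n))).2 hf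
    have hdeg : g.natDegree = d0 := MvPolynomial.natDegree_finSuccEquiv f
    set c := g.coeff d0 with hc
    have hcne : c ≠ 0 := by
      rw [hc, ← hdeg]
      exact Polynomial.leadingCoeff_ne_zero.2 hgne
    set S' : Fin n → Finset K := fun i => S i.succ with hS'
    have hcS : ∀ i, c.degreeOf i < (S' i).card := fun i =>
      lt_of_le_of_lt (MvPolynomial.degreeOf_coeff_finSuccEquiv f i d0) (hS i.succ)
    have hIH := ih c hcne S' hcS
    set T := (Fintype.piFinset S').filter fun y => MvPolynomial.eval y c ≠ 0 with hT
    set F := (Fintype.piFinset S).filter fun x => MvPolynomial.eval x f ≠ 0 with hF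
    -- fiberwise count
    have hmap : ∀ x ∈ F, Fin.tail x ∈ Fintype.piFinset S' := by
      intro x hx
      rw [Fintype.mem_piFinset]
      intro i
      exact (Fintype.mem_piFinset.1 (Finset.mem_filter.1 hx).1) i.succ
    have hcard : F.card = ∑ y ∈ Fintype.piFinset S', (F.filter fun x => Fin.tail x = y).card :=
      Finset.card_eq_sum_card_fiberwise hmap
    -- per-fiber bound for y ∈ T
    have hfiber : ∀ y ∈ T, (S 0).card - d0 ≤ (F.filter fun x => Fin.tail x = y).card := by
      intro y hy
      obtain ⟨hyP, hyc⟩ := Finset.mem_filter.1 hy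
      set p := Polynomial.map (MvPolynomial.eval y) g with hp
      have hpc : p.coeff d0 = MvPolynomial.eval y c := by simp [hp, hc]
      have hpne : p ≠ 0 := fun h => hyc (by rw [← hpc, h, Polynomial.coeff_zero])
      have hpd : p.natDegree ≤ d0 := hdeg ▸ Polynomial.natDegree_map_le
      have hroots : ((S 0).filter fun a => p.eval a = 0).card ≤ d0 := by
        have hsub : ((S 0).filter fun a => p.eval a = 0) ⊆ p.roots.toFinset := by
          intro a ha
          rw [Multiset.mem_toFinset, Polynomial.mem_roots hpne]
          exact (Finset.mem_filter.1 ha).2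
        calc ((S 0).filter fun a => p.eval a = 0).card ≤ p.roots.toFinset.card :=
              Finset.card_le_card hsub
          _ ≤ Multiset.card p.roots := p.roots.toFinset_card_le
          _ ≤ p.natDegree := Polynomial.card_roots' p
          _ ≤ d0 := hpd
      have hsplit := Finset.card_filter_add_card_filter_not
        (s := S 0) (p := fun a => p.eval a = 0)
      have hgood : (S 0).card - d0 ≤ ((S 0).filter fun a => ¬ p.eval a = 0).card := by omega
      refine le_trans hgood (Finset.card_le_card_of_injOn (fun a => Fin.cons a y) ?_ ?_)
      · intro a ha
        obtain ⟨haS, hae⟩ := Finset.mem_filter.1 ha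
        refine Finset.mem_filter.2 ⟨Finset.mem_filter.2 ⟨?_, ?_⟩, ?_⟩
        · rw [Fintype.mem_piFinset]
          intro i
          refine Fin.cases ?_ ?_ i
          · simpa using haS
          · intro j
            simpa using (Fintype.mem_piFinset.1 hyP) j
        · rw [MvPolynomial.eval_eq_eval_mv_eval']
          exact hae
        · funext j; simp [Fin.tail]
      · intro a _ b _ hab
        have := congrArg (fun z => z 0) hab
        simpa using this
    -- combine
    have hTsub : T ⊆ Fintype.piFinset S' := Finset.filter_subset _ _
    have hsum : T.card * ((S 0).card - d0) ≤ F.card := by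
      calc T.card * ((S 0).card - d0) = ∑ _y ∈ T, ((S 0).card - d0) := by
            rw [Finset.sum_const, smul_eq_mul]
        _ ≤ ∑ y ∈ T, (F.filter fun x => Fin.tail x = y).card := Finset.sum_le_sum hfiber
        _ ≤ ∑ y ∈ Fintype.piFinset S', (F.filter fun x => Fin.tail x = y).card :=
            Finset.sum_le_sum_of_subset hTsub
        _ = F.card := hcard.symm
    have hprod : ∏ i, ((S i).card - f.degreeOf i)
        = ((S 0).card - d0) * ∏ i : Fin n, ((S' i).card - f.degreeOf i.succ) := by
      rw [Fin.prod_univ_succ]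
    have hprodle : (∏ i : Fin n, ((S' i).card - f.degreeOf i.succ)) ≤ T.card := by
      refine le_trans (Finset.prod_le_prod' fun i _ => ?_) hIH
      exact Nat.sub_le_sub_left (MvPolynomial.degreeOf_coeff_finSuccEquiv f i d0) _
    calc ∏ i, ((S i).card - f.degreeOf i)
        = ((S 0).card - d0) * ∏ i : Fin n, ((S' i).card - f.degreeOf i.succ) := hprod
      _ ≤ ((S 0).card - d0) * T.card := Nat.mul_le_mul_left _ hprodle
      _ = T.card * ((S 0).card - d0) := Nat.mul_comm _ _
      _ ≤ F.card := hsum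
end

section
/- Zippel's Theorem. Let K be a commutative integral domain, f a nonzero polynomial in n variables over K such that the degree of f in each variable x_i is at most d, and let S be a finite subset of K with |S| > d. Then the number of tuples (x_1,…,x_n) ∈ S^n with f(x_1,…,x_n) ≠ 0 is at least (|S| − d)^n. -/
/-- Zippel's Theorem. -/
theorem zippel
    {K : Type*} [CommRing K] [IsDomain K] [DecidableEq K] {n : ℕ}
    (f : MvPolynomial (Fin n) K) (hf : f ≠ 0) (d : ℕ)
    (hdeg : ∀ i, f.degreeOf i ≤ d)
    (S : Finset K) (hS : d < S.card) :
    (S.card - d) ^ n ≤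
      ((Fintype.piFinset fun _ : Fin n => S).filter
        fun x => MvPolynomial.eval x f ≠ 0).card := by
  induction n with
  | zero =>
      simp only [pow_zero]
      rw [Nat.one_le_iff_ne_zero, ← Nat.pos_iff_ne_zero, Finset.card_pos]
      obtain ⟨c, rfl⟩ := MvPolynomial.C_surjective (Fin 0) f
      refine ⟨isEmptyElim, ?_⟩
      simp only [Finset.mem_filter, MvPolynomial.eval_C]
      exact ⟨Fintype.mem_piFinset.mpr fun i => isEmptyElim i, fun hc => hf (by simp [hc])⟩
  | succ n ih =>
      set F := MvPolynomial.finSuccEquiv K n f with hF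
      have hF0 : F ≠ 0 := fun h => hf (by simpa using (map_eq_zero_iff _
        (MvPolynomial.finSuccEquiv K n).injective).mp h)
      set g := F.leadingCoeff with hg
      have hg0 : g ≠ 0 := Polynomial.leadingCoeff_ne_zero.mpr hF0
      have hgd : ∀ i, g.degreeOf i ≤ d := by
        intro i
        exact le_trans (MvPolynomial.degreeOf_coeff_finSuccEquiv f i F.natDegree)
          (hdeg i.succ)
      have hFd : F.natDegree ≤ d := by
        rw [MvPolynomial.natDegree_finSuccEquiv]; exact hdeg 0
      have hIH := ih g hg0 hgd
      set T := (Fintype.piFinset fun _ : Fin n => S).filter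
        fun x => MvPolynomial.eval x g ≠ 0 with hT
      -- for each s ∈ T, the univariate polynomial has ≥ card S - d nonroots in S
      have key : ∀ s ∈ T, S.card - d ≤
          (S.filter fun a => MvPolynomial.eval (Fin.cons a s) f ≠ 0).card := by
        intro s hs
        rw [Finset.mem_filter] at hs
        set p := F.map (MvPolynomial.eval s) with hp
        have hlead : p.coeff F.natDegree ≠ 0 := by
          rw [hp, Polynomial.coeff_map]; exact hs.2
        have hp0 : p ≠ 0 := fun h => hlead (by simp [h])
        have hpd : p.natDegree ≤ d :=
          le_trans (Polynomial.natDegree_map_le ..) hFd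
        have hroots : (S.filter fun a => Polynomial.eval a p = 0).card ≤ d := by
          have hsub : (S.filter fun a => Polynomial.eval a p = 0) ⊆
              p.roots.toFinset := by
            intro a ha
            rw [Finset.mem_filter] at ha
            rw [Multiset.mem_toFinset, Polynomial.mem_roots hp0]
            exact ha.2
          calc (S.filter fun a => Polynomial.eval a p = 0).card
              ≤ p.roots.toFinset.card := Finset.card_le_card hsub
            _ ≤ Multiset.card p.roots := Multiset.toFinset_card_le _
            _ ≤ p.natDegree := Polynomial.card_roots' p
            _ ≤ d := hpd
        have : S.card ≤ (S.filter fun a => Polynomial.eval a p = 0).card +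
            (S.filter fun a => Polynomial.eval a p ≠ 0).card := by
          rw [Finset.card_filter_add_card_filter_not]
        have h2 : S.card - d ≤ (S.filter fun a => Polynomial.eval a p ≠ 0).card := by
          omega
        refine le_trans h2 (le_of_eq ?_)
        congr 1
        ext a
        simp only [Finset.mem_filter, MvPolynomial.eval_eq_eval_mv_eval', hp, hF]
      -- assemble via sigma
      set A := T.sigma fun s => S.filter fun a =>
        MvPolynomial.eval (Fin.cons a s) f ≠ 0 with hA
      have hAcard : (S.card - d) ^ (n + 1) ≤ A.card := by
        rw [Finset.card_sigma]
        calc (S.card - d) ^ (n + 1) = (S.card - d) ^ n * (S.card - d) := by ring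
          _ ≤ T.card * (S.card - d) := Nat.mul_le_mul_right _ hIH
          _ = ∑ _s ∈ T, (S.card - d) := by rw [Finset.sum_const, smul_eq_mul]
          _ ≤ ∑ s ∈ T, (S.filter fun a =>
              MvPolynomial.eval (Fin.cons a s) f ≠ 0).card :=
            Finset.sum_le_sum key
      refine le_trans hAcard (Finset.card_le_card_of_injOn
        (fun q => Fin.cons q.2 q.1) ?_ ?_)
      · rintro ⟨s, a⟩ hq
        simp only [Finset.mem_coe, hA, Finset.mem_sigma, Finset.mem_filter, hT,
          Fintype.mem_piFinset] at hq
        simp only [Finset.mem_coe, Finset.mem_filter, Fintype.mem_piFinset]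
        refine ⟨fun i => ?_, hq.2.2⟩
        refine Fin.cases ?_ ?_ i
        · simpa using hq.2.1
        · intro j; simpa using hq.1.1 j
      · rintro ⟨s, a⟩ _ ⟨s', a'⟩ _ h
        simp only at h
        have h1 : a = a' := by
          have := congrFun h 0; simpa using this
        have h2 : s = s' := by
          funext j
          have := congrFun h j.succ; simpa using this
        simp [h1, h2]
end

section
/- DeMillo–Lipton Theorem. Let f be a nonzero polynomial in n variables over the integers of total degree at most d, let s > d, and let S = {1, 2, …, s}. Then the number of tuples (x_1,…,x_n) ∈ S^n with f(x_1,…,x_n) ≠ 0 is at least (s − d)^n. -/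
/-- DeMillo–Lipton Theorem. -/
theorem demillo_lipton
    {n : ℕ} (f : MvPolynomial (Fin n) ℤ) (hf : f ≠ 0) (d s : ℕ)
    (hdeg : f.totalDegree ≤ d) (hs : d < s) :
    (s - d) ^ n ≤
      ((Fintype.piFinset fun _ : Fin n => Finset.Icc (1 : ℤ) s).filter
        fun x => MvPolynomial.eval x f ≠ 0).card := by
  induction n generalizing d with
  | zero =>
    obtain ⟨c, rfl⟩ := MvPolynomial.C_surjective (Fin 0) f
    have hc : c ≠ 0 := fun h => hf (by simp [h])
    refine le_trans (by norm_num) (Finset.card_pos.mpr ⟨default, ?_⟩)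
    simp only [Finset.mem_filter, Fintype.mem_piFinset]
    exact ⟨fun i => i.elim0, by simp [hc]⟩
  | succ n ih =>
    set q := MvPolynomial.finSuccEquiv ℤ n f with hq
    have hq0 : q ≠ 0 := by
      simpa [hq] using (map_ne_zero_iff _ (MvPolynomial.finSuccEquiv ℤ n).injective).mpr hf
    set k := q.natDegree with hk
    set g := q.coeff k with hgdef
    have hg : g ≠ 0 := Polynomial.leadingCoeff_ne_zero.mpr hq0
    have hkd : k ≤ d := by
      have := MvPolynomial.natDegree_finSuccEquiv f
      rw [← hq] at this
      calc k = f.degreeOf 0 := this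
        _ ≤ f.totalDegree := MvPolynomial.degreeOf_le_totalDegree f 0
        _ ≤ d := hdeg
    have hgdeg : g.totalDegree ≤ d - k := by
      have := MvPolynomial.totalDegree_coeff_finSuccEquiv_add_le f k (by rw [← hq]; exact hg)
      rw [← hq, ← hgdef] at this
      omega
    have hdks : d - k < s := lt_of_le_of_lt (Nat.sub_le d k) hs
    set B := ((Fintype.piFinset fun _ : Fin n => Finset.Icc (1 : ℤ) s).filter
        fun y => MvPolynomial.eval y g ≠ 0) with hB
    have hBcard : (s - (d - k)) ^ n ≤ B.card := ih g hg (d - k) hgdeg hdks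
    -- for each y in B, the univariate polynomial
    have key : ∀ y ∈ B, s - d ≤
        ((Finset.Icc (1 : ℤ) s).filter
          fun a => Polynomial.eval a (q.map (MvPolynomial.eval y)) ≠ 0).card := by
      intro y hy
      set p := q.map (MvPolynomial.eval y) with hp
      have hpk : p.coeff k ≠ 0 := by
        rw [hp, Polynomial.coeff_map]
        exact (Finset.mem_filter.mp hy).2
      have hp0 : p ≠ 0 := fun h => hpk (by simp [h])
      have hpdeg : p.natDegree ≤ k := Polynomial.natDegree_map_le
      have hroots : ((Finset.Icc (1 : ℤ) s).filter
          fun a => Polynomial.eval a p = 0).card ≤ k :=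
        calc ((Finset.Icc (1 : ℤ) s).filter fun a => Polynomial.eval a p = 0).card
            ≤ p.roots.toFinset.card := Finset.card_le_card (by
              intro a ha
              rw [Multiset.mem_toFinset, Polynomial.mem_roots hp0]
              exact (Finset.mem_filter.mp ha).2)
          _ ≤ Multiset.card p.roots := p.roots.toFinset_card_le
          _ ≤ p.natDegree := Polynomial.card_roots' p
          _ ≤ k := hpdeg
      have hcard : (Finset.Icc (1 : ℤ) s).card = s := by
        rw [Int.card_Icc]; omega
      have := Finset.card_filter_add_card_filter_not
        (s := Finset.Icc (1 : ℤ) s) (p := fun a => Polynomial.eval a p = 0)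
      simp only [ne_eq] at this ⊢
      omega
    -- build the union
    set U := B.biUnion (fun y =>
      (((Finset.Icc (1 : ℤ) s).filter
          fun a => Polynomial.eval a (q.map (MvPolynomial.eval y)) ≠ 0).image
        (fun a => Fin.cons a y : ℤ → Fin (n + 1) → ℤ))) with hU
    have hdisj : ∀ y₁ ∈ B, ∀ y₂ ∈ B, y₁ ≠ y₂ → Disjoint
        ((((Finset.Icc (1 : ℤ) s).filter
          fun a => Polynomial.eval a (q.map (MvPolynomial.eval y₁)) ≠ 0).image
          (fun a => Fin.cons a y₁ : ℤ → Fin (n + 1) → ℤ)))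
        ((((Finset.Icc (1 : ℤ) s).filter
          fun a => Polynomial.eval a (q.map (MvPolynomial.eval y₂)) ≠ 0).image
          (fun a => Fin.cons a y₂ : ℤ → Fin (n + 1) → ℤ))) := by
      intro y₁ _ y₂ _ hne
      rw [Finset.disjoint_left]
      rintro x hx1 hx2
      obtain ⟨a₁, _, rfl⟩ := Finset.mem_image.mp hx1
      obtain ⟨a₂, _, h2⟩ := Finset.mem_image.mp hx2
      apply hne
      have := congrArg Fin.tail h2
      simpa [Fin.tail_cons] using this.symm
    have hUcard : U.card = ∑ y ∈ B,
        (((Finset.Icc (1 : ℤ) s).filter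
          fun a => Polynomial.eval a (q.map (MvPolynomial.eval y)) ≠ 0).image
          (fun a => Fin.cons a y : ℤ → Fin (n + 1) → ℤ)).card :=
      Finset.card_biUnion hdisj
    have himgcard : ∀ y ∈ B,
        (((Finset.Icc (1 : ℤ) s).filter
          fun a => Polynomial.eval a (q.map (MvPolynomial.eval y)) ≠ 0).image
          (fun a => Fin.cons a y : ℤ → Fin (n + 1) → ℤ)).card
        = ((Finset.Icc (1 : ℤ) s).filter
          fun a => Polynomial.eval a (q.map (MvPolynomial.eval y)) ≠ 0).card := by
      intro y _
      apply Finset.card_image_of_injective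
      intro a b hab
      have := congrArg (fun v => v 0) hab
      simpa using this
    have hUsub : U ⊆ ((Fintype.piFinset fun _ : Fin (n+1) => Finset.Icc (1 : ℤ) s).filter
        fun x => MvPolynomial.eval x f ≠ 0) := by
      intro x hx
      obtain ⟨y, hy, hx⟩ := Finset.mem_biUnion.mp hx
      obtain ⟨a, ha, rfl⟩ := Finset.mem_image.mp hx
      have hymem := Fintype.mem_piFinset.mp (Finset.mem_filter.mp hy).1
      rw [Finset.mem_filter] at ha ⊢
      constructor
      · rw [Fintype.mem_piFinset]
        intro i
        refine Fin.cases ?_ ?_ i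
        · simpa using ha.1
        · intro j; simpa using hymem j
      · rw [MvPolynomial.eval_eq_eval_mv_eval']
        exact ha.2
    calc (s - d) ^ (n + 1) = (s - d) ^ n * (s - d) := by ring
      _ ≤ B.card * (s - d) := by
          apply Nat.mul_le_mul_right
          exact le_trans (Nat.pow_le_pow_left (Nat.sub_le_sub_left (Nat.sub_le d k) s) n) hBcard
      _ = ∑ _y ∈ B, (s - d) := by rw [Finset.sum_const, smul_eq_mul]
      _ ≤ ∑ y ∈ B, ((Finset.Icc (1 : ℤ) s).filter
            fun a => Polynomial.eval a (q.map (MvPolynomial.eval y)) ≠ 0).card :=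
          Finset.sum_le_sum key
      _ = U.card := by
          rw [hUcard]
          exact (Finset.sum_congr rfl himgcard).symm
      _ ≤ _ := Finset.card_le_card hUsub
end

section
/- Ore's Theorem. Let f be a nonzero polynomial in n ≥ 1 variables of total degree d over a finite field F_q with q elements. Then the number of tuples (x_1,…,x_n) ∈ F_q^n with f(x_1,…,x_n) ≠ 0 is at least (q − d) · q^{n−1} (as an integer inequality, where q − d may be negative). -/
open Finset MvPolynomial

lemma ore_root_count {F : Type*} [Field F] [Fintype F] [DecidableEq F]
    {Q : Polynomial F} (hQ : Q ≠ 0) :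
    (Finset.univ.filter fun y => Q.eval y = 0).card ≤ Q.natDegree := by
  have hsub : (Finset.univ.filter fun y => Q.eval y = 0) ⊆ Q.roots.toFinset := by
    intro y hy
    simp only [mem_filter, mem_univ, true_and] at hy
    simp [Polynomial.mem_roots, hQ, Polynomial.IsRoot, hy]
  exact (Finset.card_le_card hsub).trans
    ((Multiset.toFinset_card_le _).trans (Polynomial.card_roots' Q))

lemma ore_sz {F : Type*} [Field F] [Fintype F] [DecidableEq F] {q : ℕ}
    (hq : Fintype.card F = q) :
    ∀ (n : ℕ) (f : MvPolynomial (Fin n) F), f ≠ 0 →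
      (Finset.univ.filter fun x : Fin n → F => MvPolynomial.eval x f = 0).card * q
        ≤ f.totalDegree * q ^ n := by
  intro n
  induction n with
  | zero =>
    intro f hf
    have h0 : f.coeff 0 ≠ 0 := by
      intro h
      exact hf (by rw [MvPolynomial.eq_C_of_isEmpty f, h, map_zero])
    have hz : (Finset.univ.filter fun x : Fin 0 → F => MvPolynomial.eval x f = 0).card = 0 := by
      rw [Finset.card_eq_zero, Finset.filter_eq_empty_iff]
      intro x _
      rw [MvPolynomial.eq_C_of_isEmpty f]
      simpa using h0
    rw [hz]
    simp
  | succ n ih =>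
    intro f hf
    set P := finSuccEquiv F n f with hP
    have hPne : P ≠ 0 := by simp [hP, hf]
    set k := P.natDegree with hk
    set g := P.coeff k with hg
    have hgne : g ≠ 0 := Polynomial.leadingCoeff_ne_zero.mpr hPne
    have hdk : g.totalDegree + k ≤ f.totalDegree :=
      totalDegree_coeff_finSuccEquiv_add_le f k hgne
    set A := (Finset.univ.filter fun s : Fin n → F => MvPolynomial.eval s g = 0).card with hA
    set B := (Finset.univ.filter fun s : Fin n → F => ¬ MvPolynomial.eval s g = 0).card with hB
    -- rewrite the count as a sum over the tail
    have hcount :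
        (Finset.univ.filter fun x : Fin (n+1) → F => MvPolynomial.eval x f = 0).card
          = ∑ s : Fin n → F,
            (Finset.univ.filter fun y : F =>
              Polynomial.eval y (P.map (MvPolynomial.eval s)) = 0).card := by
      calc (Finset.univ.filter fun x : Fin (n+1) → F => MvPolynomial.eval x f = 0).card
          = ∑ x : Fin (n+1) → F, if MvPolynomial.eval x f = 0 then 1 else 0 :=
            Finset.card_filter _ _
        _ = ∑ z : F × (Fin n → F),
              if MvPolynomial.eval (Fin.cons z.1 z.2) f = 0 then 1 else 0 :=
            (Fintype.sum_equiv (Fin.consEquiv fun _ => F) _ _ (fun z => rfl)).symm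
        _ = ∑ s : Fin n → F, ∑ y : F,
              if MvPolynomial.eval (Fin.cons y s) f = 0 then 1 else 0 :=
            Fintype.sum_prod_type_right
              (f := fun z : F × (Fin n → F) =>
                if MvPolynomial.eval (Fin.cons z.1 z.2) f = 0 then 1 else 0)
        _ = ∑ s : Fin n → F,
              (Finset.univ.filter fun y : F =>
                Polynomial.eval y (P.map (MvPolynomial.eval s)) = 0).card := by
            refine Finset.sum_congr rfl fun s _ => ?_
            rw [Finset.card_filter]
            refine Finset.sum_congr rfl fun y _ => ?_
            rw [eval_eq_eval_mv_eval']
    -- bound each inner count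
    have hbound : ∀ s : Fin n → F,
        (Finset.univ.filter fun y : F =>
          Polynomial.eval y (P.map (MvPolynomial.eval s)) = 0).card
        ≤ if MvPolynomial.eval s g = 0 then q else k := by
      intro s
      by_cases hs : MvPolynomial.eval s g = 0
      · simp only [hs, if_true]
        calc _ ≤ (Finset.univ : Finset F).card := Finset.card_filter_le _ _
          _ = q := by rw [Finset.card_univ, hq]
      · simp only [hs, if_false]
        have hQne : P.map (MvPolynomial.eval s) ≠ 0 := by
          intro h
          apply hs
          have := congrArg (fun Q => Polynomial.coeff Q k) h
          simpa [Polynomial.coeff_map] using this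
        exact (ore_root_count hQne).trans Polynomial.natDegree_map_le
    have hBle : B ≤ q ^ n := by
      calc B ≤ (Finset.univ : Finset (Fin n → F)).card := Finset.card_filter_le _ _
        _ = q ^ n := by rw [Finset.card_univ, Fintype.card_fun, hq, Fintype.card_fin]
    have hsum :
        (∑ s : Fin n → F,
          (Finset.univ.filter fun y : F =>
            Polynomial.eval y (P.map (MvPolynomial.eval s)) = 0).card)
        ≤ q * A + k * q ^ n := by
      calc _ ≤ ∑ s : Fin n → F, if MvPolynomial.eval s g = 0 then q else k :=
              Finset.sum_le_sum fun s _ => hbound s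
        _ = A * q + B * k := by
              rw [Finset.sum_ite, Finset.sum_const, Finset.sum_const, smul_eq_mul, smul_eq_mul]
        _ ≤ q * A + k * q ^ n := by nlinarith [hBle]
    have hih := ih g hgne
    calc (Finset.univ.filter fun x : Fin (n+1) → F => MvPolynomial.eval x f = 0).card * q
        ≤ (q * A + k * q ^ n) * q := by
          rw [hcount]; exact Nat.mul_le_mul_right q hsum
      _ = q * (A * q) + k * q ^ (n+1) := by ring
      _ ≤ q * (g.totalDegree * q ^ n) + k * q ^ (n+1) := by gcongr
      _ = (g.totalDegree + k) * q ^ (n+1) := by ring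
      _ ≤ f.totalDegree * q ^ (n+1) := by gcongr

/-- Ore's Theorem. -/
theorem ore
    {F : Type*} [Field F] [Fintype F] [DecidableEq F] {n q : ℕ} (hn : 1 ≤ n)
    (hq : Fintype.card F = q)
    (f : MvPolynomial (Fin n) F) (hf : f ≠ 0) (d : ℕ)
    (hdeg : f.totalDegree = d) :
    ((q : ℤ) - d) * (q : ℤ) ^ (n - 1) ≤
      ((Finset.univ : Finset (Fin n → F)).filter
        fun x => MvPolynomial.eval x f ≠ 0).card := by
  have hsz := ore_sz hq n f hf
  rw [hdeg] at hsz
  have hqpos : 0 < q := by rw [← hq]; exact Fintype.card_pos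
  have hsplit :
      ((Finset.univ : Finset (Fin n → F)).filter fun x => MvPolynomial.eval x f = 0).card
      + ((Finset.univ : Finset (Fin n → F)).filter fun x => MvPolynomial.eval x f ≠ 0).card
      = q ^ n := by
    rw [Finset.card_filter_add_card_filter_not, Finset.card_univ,
      Fintype.card_fun, hq, Fintype.card_fin]
  have hn' : n - 1 + 1 = n := Nat.succ_pred_eq_of_pos hn
  set Z := ((Finset.univ : Finset (Fin n → F)).filter fun x => MvPolynomial.eval x f = 0).card
  set N := ((Finset.univ : Finset (Fin n → F)).filter fun x => MvPolynomial.eval x f ≠ 0).card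
  have hqn : (q : ℤ) ^ n = q ^ (n - 1) * q := by rw [← pow_succ, hn']
  have hZ : (Z : ℤ) * q ≤ (d * (q : ℤ) ^ (n-1)) * q := by
    rw [mul_assoc, ← hqn]
    exact_mod_cast hsz
  have hq' : (0 : ℤ) < q := by exact_mod_cast hqpos
  have hZ' : (Z : ℤ) ≤ d * (q : ℤ) ^ (n-1) := le_of_mul_le_mul_right hZ hq'
  have hNZ : (Z : ℤ) + N = (q : ℤ) ^ n := by exact_mod_cast hsplit
  nlinarith [hNZ, hZ', hqn]
end

section
/- Knuth's qualitative zero-density theorem. Let f be a nonzero polynomial in n variables over the integers. For each natural number N, let S_N = {−N, −N+1, …, N−1, N}. Then the fraction of zeros of f on the grid S_N × ⋯ × S_N, i.e., the number of tuples (x_1,…,x_n) ∈ S_N^n with f(x_1,…,x_n) = 0 divided by (2N+1)^n, tends to zero as N → ∞. -/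
open Filter Finset MvPolynomial

lemma schwartz_zippel_int :
    ∀ (n : ℕ) (f : MvPolynomial (Fin n) ℤ), f ≠ 0 → ∀ (S : Finset ℤ),
      ((Fintype.piFinset fun _ : Fin n => S).filter
          fun x => MvPolynomial.eval x f = 0).card * S.card
        ≤ f.totalDegree * S.card ^ n := by
  intro n
  induction n with
  | zero =>
      intro f hf S
      obtain ⟨c, rfl⟩ := MvPolynomial.C_surjective (Fin 0) f
      have hc : c ≠ 0 := fun h => hf (by simp [h])
      have h0 : ((Fintype.piFinset fun _ : Fin 0 => S).filter
          fun x => MvPolynomial.eval x (MvPolynomial.C c) = 0) = ∅ := by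
        apply Finset.filter_false_of_mem
        intro x _
        simpa using hc
      rw [h0]
      simp
  | succ n ih =>
      intro f hf S
      set F := MvPolynomial.finSuccEquiv ℤ n f with hF
      have hF0 : F ≠ 0 := by
        simp only [hF, ne_eq, EmbeddingLike.map_eq_zero_iff]
        exact hf
      set d := F.natDegree with hd
      set g := F.coeff d with hg
      have hg0 : g ≠ 0 := by
        simpa [hg, hd] using Polynomial.leadingCoeff_ne_zero.mpr hF0
      set T := (Fintype.piFinset fun _ : Fin n => S) with hT
      set T₀ := T.filter (fun s => MvPolynomial.eval s g = 0) with hT₀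
      have key : ((Fintype.piFinset fun _ : Fin (n+1) => S).filter
          fun x => MvPolynomial.eval x f = 0).card
          ≤ ∑ s ∈ T, (S.filter fun y =>
              MvPolynomial.eval (Fin.cons y s : Fin (n+1) → ℤ) f = 0).card := by
        rw [← Finset.card_sigma]
        apply Finset.card_le_card_of_injOn (fun x => ⟨Fin.tail x, x 0⟩)
        · intro x hx
          simp only [Finset.mem_coe, Finset.mem_filter, Fintype.mem_piFinset] at hx
          rw [Finset.mem_coe, Finset.mem_sigma]
          constructor
          · rw [hT, Fintype.mem_piFinset]
            intro i; exact hx.1 _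
          · rw [Finset.mem_filter]
            exact ⟨hx.1 0, by rw [Fin.cons_self_tail]; exact hx.2⟩
        · intro x _ y _ h
          injection h with h1 h2
          rw [← Fin.cons_self_tail x, ← Fin.cons_self_tail y, h1, h2]
      have fib : ∀ s ∈ T, (S.filter fun y =>
          MvPolynomial.eval (Fin.cons y s : Fin (n+1) → ℤ) f = 0).card
          ≤ if MvPolynomial.eval s g = 0 then S.card else d := by
        intro s _
        by_cases hs : MvPolynomial.eval s g = 0
        · simp only [hs, if_true]
          exact Finset.card_le_card (Finset.filter_subset _ _)
        · simp only [hs, if_false]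
          set p := Polynomial.map (MvPolynomial.eval s) F with hp
          have hpc : p.coeff d ≠ 0 := by
            simpa [hp, Polynomial.coeff_map, hg] using hs
          have hp0 : p ≠ 0 := fun h => hpc (by simp [h])
          have hsub : (S.filter fun y =>
              MvPolynomial.eval (Fin.cons y s : Fin (n+1) → ℤ) f = 0)
              ⊆ p.roots.toFinset := by
            intro y hy
            simp only [Finset.mem_filter] at hy
            rw [Multiset.mem_toFinset, Polynomial.mem_roots hp0]
            rw [MvPolynomial.eval_eq_eval_mv_eval'] at hy
            exact hy.2
          calc (S.filter fun y =>
              MvPolynomial.eval (Fin.cons y s : Fin (n+1) → ℤ) f = 0).card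
              ≤ p.roots.toFinset.card := Finset.card_le_card hsub
            _ ≤ Multiset.card p.roots := Multiset.toFinset_card_le _
            _ ≤ p.natDegree := Polynomial.card_roots' p
            _ ≤ d := Polynomial.natDegree_map_le
      have sum_bound : ∑ s ∈ T, (S.filter fun y =>
          MvPolynomial.eval (Fin.cons y s : Fin (n+1) → ℤ) f = 0).card
          ≤ T₀.card * S.card + d * S.card ^ n := by
        calc ∑ s ∈ T, (S.filter fun y =>
              MvPolynomial.eval (Fin.cons y s : Fin (n+1) → ℤ) f = 0).card
            ≤ ∑ s ∈ T, (if MvPolynomial.eval s g = 0 then S.card else d) :=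
              Finset.sum_le_sum fib
          _ = T₀.card * S.card + (T.filter (fun s => ¬ MvPolynomial.eval s g = 0)).card * d := by
              rw [Finset.sum_ite, Finset.sum_const, Finset.sum_const, smul_eq_mul, smul_eq_mul]
          _ ≤ T₀.card * S.card + S.card ^ n * d := by
              gcongr
              calc (T.filter (fun s => ¬ MvPolynomial.eval s g = 0)).card
                  ≤ T.card := Finset.card_le_card (Finset.filter_subset _ _)
                _ = S.card ^ n := by
                    rw [hT, Fintype.card_piFinset]
                    simp
          _ = T₀.card * S.card + d * S.card ^ n := by ring
      have ihg := ih g hg0 S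
      have hdeg : g.totalDegree + d ≤ f.totalDegree := by
        have := MvPolynomial.totalDegree_coeff_finSuccEquiv_add_le f d (by
          simpa [hg, hF] using hg0)
        simpa [hg, hF] using this
      calc ((Fintype.piFinset fun _ : Fin (n+1) => S).filter
            fun x => MvPolynomial.eval x f = 0).card * S.card
          ≤ (T₀.card * S.card + d * S.card ^ n) * S.card :=
            Nat.mul_le_mul (key.trans sum_bound) le_rfl
        _ = T₀.card * S.card * S.card + d * S.card ^ (n+1) := by ring
        _ ≤ g.totalDegree * S.card ^ n * S.card + d * S.card ^ (n+1) := by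
            gcongr
        _ = (g.totalDegree + d) * S.card ^ (n+1) := by ring
        _ ≤ f.totalDegree * S.card ^ (n+1) := Nat.mul_le_mul hdeg le_rfl

/-- Knuth's qualitative zero-density theorem. -/
theorem knuth_zero_density
    {n : ℕ} (f : MvPolynomial (Fin n) ℤ) (hf : f ≠ 0) :
    Tendsto
      (fun N : ℕ =>
        (((Fintype.piFinset fun _ : Fin n => Finset.Icc (-(N : ℤ)) N).filter
            fun x => MvPolynomial.eval x f = 0).card : ℝ) / (2 * N + 1) ^ n)
      atTop (nhds 0) := by
  have hcard : ∀ N : ℕ, (Finset.Icc (-(N : ℤ)) N).card = 2 * N + 1 := by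
    intro N
    rw [Int.card_Icc]
    omega
  have hden : Tendsto (fun N : ℕ => 2 * (N : ℝ) + 1) atTop atTop := by
    apply Filter.tendsto_atTop_add_const_right
    exact Tendsto.const_mul_atTop two_pos tendsto_natCast_atTop_atTop
  have hlim : Tendsto (fun N : ℕ => (f.totalDegree : ℝ) / (2 * N + 1)) atTop (nhds 0) :=
    Tendsto.div_atTop tendsto_const_nhds hden
  apply squeeze_zero (fun N => ?_) (fun N => ?_) hlim
  · positivity
  · have hpos : (0 : ℝ) < 2 * N + 1 := by positivity
    rw [div_le_div_iff₀ (by positivity) hpos]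
    have hsz := schwartz_zippel_int n f hf (Finset.Icc (-(N : ℤ)) N)
    rw [hcard N] at hsz
    calc (((Fintype.piFinset fun _ : Fin n => Finset.Icc (-(N : ℤ)) N).filter
            fun x => MvPolynomial.eval x f = 0).card : ℝ) * (2 * N + 1)
        = ((((Fintype.piFinset fun _ : Fin n => Finset.Icc (-(N : ℤ)) N).filter
            fun x => MvPolynomial.eval x f = 0).card * (2 * N + 1) : ℕ) : ℝ) := by
          push_cast; ring
      _ ≤ ((f.totalDegree * (2 * N + 1) ^ n : ℕ) : ℝ) := by exact_mod_cast hsz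
      _ = (f.totalDegree : ℝ) * (2 * N + 1) ^ n := by push_cast; ring
end

section
/- Knuth's successively-largest-sequence theorem. Let K be a commutative integral domain, f a polynomial in n variables over K, S_1,…,S_n finite subsets of K, and e = (e_1,…,e_n) a monomial of f. For j = 1,…,n, let d_j be the maximum of a_j over all monomials a of f satisfying a_i = e_i for all i < j (the successively largest sequence with respect to e). If |S_i| > d_i for all i, then the number of tuples (x_1,…,x_n) ∈ S_1 × ⋯ × S_n with f(x_1,…,x_n) ≠ 0 is at least (|S_1| − d_1)(|S_2| − d_2)⋯(|S_n| − d_n). -/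
open MvPolynomial Finset

/-- Knuth's successively-largest-sequence theorem. -/
theorem knuth_successively_largest
    {K : Type*} [CommRing K] [IsDomain K] [DecidableEq K] {n : ℕ}
    (f : MvPolynomial (Fin n) K) (S : Fin n → Finset K) (e : Fin n →₀ ℕ)
    (he : e ∈ f.support) (d : Fin n → ℕ)
    (hd : ∀ j, d j =
      ((f.support.filter fun a => ∀ i, i < j → a i = e i).sup fun a => a j))
    (hS : ∀ i, d i < (S i).card) :
    ∏ i, ((S i).card - d i) ≤
      ((Fintype.piFinset S).filter fun x => MvPolynomial.eval x f ≠ 0).card := by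
  induction n with
  | zero =>
    obtain ⟨c, rfl⟩ := MvPolynomial.C_surjective (Fin 0) f
    simp only [MvPolynomial.mem_support_iff, MvPolynomial.coeff_C] at he
    have hc : c ≠ 0 := by
      intro h; apply he; simp [h]
    have hmem : (fun (i : Fin 0) => i.elim0) ∈ (Fintype.piFinset S).filter
        fun x => MvPolynomial.eval x (MvPolynomial.C c) ≠ 0 := by
      rw [Finset.mem_filter]
      exact ⟨Fintype.mem_piFinset.mpr (fun i => i.elim0), by simp [hc]⟩
    simpa using Finset.card_pos.mpr ⟨_, hmem⟩
  | succ n ih =>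
    set g := (finSuccEquiv K n f).coeff (e 0) with hg
    set e' := Finsupp.tail e with he'def
    have he' : e' ∈ g.support := by
      rw [hg, mem_support_coeff_finSuccEquiv, he'def, Finsupp.cons_tail]
      exact he
    set d' := fun j : Fin n => d j.succ with hd'def
    have hd' : ∀ j, d' j =
        ((g.support.filter fun a => ∀ i, i < j → a i = e' i).sup fun a => a j) := by
      intro j
      show d j.succ = _
      rw [hd j.succ]
      apply le_antisymm
      · apply Finset.sup_le
        intro b hb
        rw [Finset.mem_filter] at hb
        obtain ⟨hb1, hb2⟩ := hb
        have h0 : b 0 = e 0 := hb2 0 (Fin.succ_pos j)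
        have hmem : b.tail ∈ g.support := by
          rw [hg, mem_support_coeff_finSuccEquiv, ← h0, Finsupp.cons_tail]
          exact hb1
        have : b.tail ∈ g.support.filter fun a => ∀ i, i < j → a i = e' i := by
          rw [Finset.mem_filter]
          refine ⟨hmem, fun i hi => ?_⟩
          rw [Finsupp.tail_apply, he'def, Finsupp.tail_apply]
          exact hb2 i.succ (Fin.succ_lt_succ_iff.mpr hi)
        have := Finset.le_sup (f := fun a => a j) this
        simpa [Finsupp.tail_apply] using this
      · apply Finset.sup_le
        intro a ha
        rw [Finset.mem_filter] at ha
        obtain ⟨ha1, ha2⟩ := ha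
        have hmem : a.cons (e 0) ∈ f.support := by
          rw [← mem_support_coeff_finSuccEquiv]; exact ha1
        have : a.cons (e 0) ∈ f.support.filter
            fun b => ∀ i, i < j.succ → b i = e i := by
          rw [Finset.mem_filter]
          refine ⟨hmem, fun i => ?_⟩
          induction i using Fin.cases with
          | zero => intro _; simp [Finsupp.cons_zero]
          | succ k =>
            intro hk
            rw [Finsupp.cons_succ]
            have := ha2 k (Fin.succ_lt_succ_iff.mp hk)
            rw [he'def, Finsupp.tail_apply] at this
            exact this
        have := Finset.le_sup (f := fun b => b j.succ) this
        simpa [Finsupp.cons_succ] using this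
    have hS' : ∀ i : Fin n, d' i < (S i.succ).card := fun i => hS i.succ
    have hIH := ih g (fun i => S i.succ) e' he' d' hd' hS'
    set A := (Fintype.piFinset fun i => S i.succ).filter
      (fun y => MvPolynomial.eval y g ≠ 0) with hA
    -- degree bound
    have hdeg : MvPolynomial.degreeOf 0 f = d 0 := by
      rw [degreeOf_eq_sup, hd 0]
      congr 1
      rw [Finset.filter_true_of_mem]
      intro a _ i hi
      exact absurd hi (by simp)
    -- per-y bound
    have key : ∀ y ∈ A,
        (S 0).card - d 0 ≤
          ((S 0).filter fun s => MvPolynomial.eval (Fin.cons s y) f ≠ 0).card := by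
      intro y hy
      rw [hA, Finset.mem_filter] at hy
      set q := Polynomial.map (MvPolynomial.eval y) (finSuccEquiv K n f) with hq
      have hq0 : q ≠ 0 := by
        intro h
        apply hy.2
        have : q.coeff (e 0) = MvPolynomial.eval y g := by
          rw [hq, Polynomial.coeff_map, hg]
        rw [← this, h, Polynomial.coeff_zero]
      have hqdeg : q.natDegree ≤ d 0 := by
        calc q.natDegree ≤ (finSuccEquiv K n f).natDegree := Polynomial.natDegree_map_le
          _ = MvPolynomial.degreeOf 0 f := natDegree_finSuccEquiv f
          _ = d 0 := hdeg
      have heval : ∀ s, MvPolynomial.eval (Fin.cons s y) f = q.eval s := by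
        intro s
        rw [eval_eq_eval_mv_eval', hq]
      have hroots : ((S 0).filter fun s => MvPolynomial.eval (Fin.cons s y) f = 0).card ≤ d 0 := by
        have hsub : ((S 0).filter fun s => MvPolynomial.eval (Fin.cons s y) f = 0)
            ⊆ q.roots.toFinset := by
          intro s hs
          rw [Finset.mem_filter] at hs
          rw [Multiset.mem_toFinset, Polynomial.mem_roots hq0, Polynomial.IsRoot]
          rw [← heval]
          exact hs.2
        calc ((S 0).filter fun s => MvPolynomial.eval (Fin.cons s y) f = 0).card
            ≤ q.roots.toFinset.card := Finset.card_le_card hsub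
          _ ≤ Multiset.card q.roots := q.roots.toFinset_card_le
          _ ≤ q.natDegree := Polynomial.card_roots' q
          _ ≤ d 0 := hqdeg
      have hsplit := Finset.card_filter_add_card_filter_not
        (s := S 0) (p := fun s => MvPolynomial.eval (Fin.cons s y) f = 0)
      show (S 0).card - d 0 ≤
        ((S 0).filter fun s => ¬ MvPolynomial.eval (Fin.cons s y) f = 0).card
      omega
    -- assemble
    set T := (Fintype.piFinset S).filter
      (fun x => MvPolynomial.eval x f ≠ 0) with hT
    set B := A.biUnion (fun y =>
      ((S 0).filter fun s => MvPolynomial.eval (Fin.cons s y) f ≠ 0).image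
        fun s => (Fin.cons s y : Fin (n+1) → K)) with hB
    have hBsub : B ⊆ T := by
      intro x hx
      rw [hB, Finset.mem_biUnion] at hx
      obtain ⟨y, hy, hx⟩ := hx
      rw [Finset.mem_image] at hx
      obtain ⟨s, hs, rfl⟩ := hx
      rw [Finset.mem_filter] at hs
      rw [hA, Finset.mem_filter] at hy
      rw [hT, Finset.mem_filter]
      refine ⟨?_, hs.2⟩
      rw [Fintype.mem_piFinset]
      intro i
      refine Fin.cases ?_ (fun k => ?_) i
      · simpa using hs.1
      · simp only [Fin.cons_succ]
        exact Fintype.mem_piFinset.mp hy.1 k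
    have hdisj : (A : Set (Fin n → K)).PairwiseDisjoint (fun y =>
        ((S 0).filter fun s => MvPolynomial.eval (Fin.cons s y) f ≠ 0).image
          fun s => (Fin.cons s y : Fin (n+1) → K)) := by
      intro y1 _ y2 _ hne
      simp only [Function.onFun]
      rw [Finset.disjoint_left]
      intro x hx1 hx2
      rw [Finset.mem_image] at hx1 hx2
      obtain ⟨s1, _, h1⟩ := hx1
      obtain ⟨s2, _, h2⟩ := hx2
      apply hne
      have : Fin.tail (Fin.cons s1 y1 : Fin (n+1) → K)
          = Fin.tail (Fin.cons s2 y2 : Fin (n+1) → K) := by rw [h1, h2]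
      simpa [Fin.tail_cons] using this
    have hcard : B.card = ∑ y ∈ A,
        (((S 0).filter fun s => MvPolynomial.eval (Fin.cons s y) f ≠ 0).image
          fun s => (Fin.cons s y : Fin (n+1) → K)).card :=
      Finset.card_biUnion (fun y1 h1 y2 h2 hne => hdisj h1 h2 hne)
    have himg : ∀ y : Fin n → K,
        (((S 0).filter fun s => MvPolynomial.eval (Fin.cons s y) f ≠ 0).image
          fun s => (Fin.cons s y : Fin (n+1) → K)).card
        = ((S 0).filter fun s => MvPolynomial.eval (Fin.cons s y) f ≠ 0).card := by
      intro y
      apply Finset.card_image_of_injective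
      intro a b h
      have := congrFun h 0
      simpa using this
    have hsum : ((S 0).card - d 0) * A.card ≤ B.card := by
      rw [hcard]
      calc ((S 0).card - d 0) * A.card = ∑ _y ∈ A, ((S 0).card - d 0) := by
            rw [Finset.sum_const, smul_eq_mul, mul_comm]
        _ ≤ _ := Finset.sum_le_sum (fun y hy => by rw [himg y]; exact key y hy)
    calc ∏ i, ((S i).card - d i)
        = ((S 0).card - d 0) * ∏ i : Fin n, ((S i.succ).card - d i.succ) :=
          Fin.prod_univ_succ _
      _ ≤ ((S 0).card - d 0) * A.card := Nat.mul_le_mul_left _ hIH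
      _ ≤ B.card := hsum
      _ ≤ T.card := Finset.card_le_card hBsub
end

section
/- Schauz's Theorem. Let K be a commutative integral domain, f a polynomial in n variables over K, and S_1,…,S_n finite subsets of K. Suppose e = (e_1,…,e_n) is a monomial of f, and d_1,…,d_n are natural numbers with e_i ≤ d_i < |S_i| for all i. If f contains no monomial e′ ≠ e such that for every i = 1,…,n either e′_i = e_i or e′_i > d_i, then there exists a tuple (x_1,…,x_n) with x_i ∈ S_i for all i such that f(x_1,…,x_n) ≠ 0. -/
open MvPolynomial Finset Polynomial

/-- Schauz's Theorem. -/
theorem schauz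
    {K : Type*} [CommRing K] [IsDomain K] {n : ℕ}
    (f : MvPolynomial (Fin n) K) (S : Fin n → Finset K) (e : Fin n →₀ ℕ)
    (he : e ∈ f.support) (d : Fin n → ℕ)
    (hed : ∀ i, e i ≤ d i) (hdS : ∀ i, d i < (S i).card)
    (hlead : ∀ e' ∈ f.support, e' ≠ e → ¬ (∀ i, e' i = e i ∨ d i < e' i)) :
    ∃ x : Fin n → K, (∀ i, x i ∈ S i) ∧ MvPolynomial.eval x f ≠ 0 := by
  classical
  let F := FractionRing K
  let φ : K →+* F := algebraMap K F
  have hinj : Function.Injective φ := IsFractionRing.injective K F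
  have hT : ∀ i, ∃ T ⊆ S i, T.card = d i + 1 := fun i =>
    Finset.exists_subset_card_eq (hdS i)
  choose T hTS hTcard using hT
  have hInjOn : ∀ i, Set.InjOn φ (T i) := fun i => hinj.injOn
  let w : ∀ _ : Fin n, K → F := fun i t => (Lagrange.basis (T i) φ t).coeff (e i)
  have key : ∀ i, ∀ a : ℕ, a ≤ d i →
      ∑ t ∈ T i, (φ t) ^ a * w i t = if a = e i then 1 else 0 := by
    intro i a ha
    have hdeg : ((X : F[X]) ^ a).degree < (T i).card := by
      rw [hTcard, Polynomial.degree_X_pow]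
      exact_mod_cast Nat.lt_succ_of_le ha
    have h1 := Lagrange.eq_interpolate (hInjOn i) hdeg
    have h2 : ((X : F[X]) ^ a).coeff (e i) = ∑ t ∈ T i, (φ t) ^ a * w i t := by
      conv_lhs => rw [h1]
      simp only [Lagrange.interpolate_apply, Polynomial.eval_pow, Polynomial.eval_X,
        Polynomial.finset_sum_coeff, Polynomial.coeff_C_mul]
      rfl
    rw [← h2, Polynomial.coeff_X_pow]
    simp [eq_comm]
  by_contra h
  push_neg at h
  have hz : ∀ x ∈ Fintype.piFinset T,
      MvPolynomial.eval₂ φ (fun i => φ (x i)) f = 0 := by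
    intro x hx
    have hxS : ∀ i, x i ∈ S i := fun i => hTS i (Fintype.mem_piFinset.mp hx i)
    have h0 : MvPolynomial.eval x f = 0 := h x hxS
    have hcomp := MvPolynomial.eval₂_comp_left φ (RingHom.id K) x f
    rw [RingHom.comp_id] at hcomp
    have heq : MvPolynomial.eval₂ φ (fun i => φ (x i)) f = φ (MvPolynomial.eval x f) :=
      hcomp.symm
    rw [heq, h0, map_zero]
  have hN : ∑ x ∈ Fintype.piFinset T,
      (∏ i, w i (x i)) * MvPolynomial.eval₂ φ (fun i => φ (x i)) f = φ (f.coeff e) := by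
    have expand : ∀ x : Fin n → K, MvPolynomial.eval₂ φ (fun i => φ (x i)) f
        = ∑ e' ∈ f.support, φ (f.coeff e') * ∏ i, (φ (x i)) ^ e' i := fun x =>
      MvPolynomial.eval₂_eq' φ _ f
    calc ∑ x ∈ Fintype.piFinset T,
          (∏ i, w i (x i)) * MvPolynomial.eval₂ φ (fun i => φ (x i)) f
        = ∑ e' ∈ f.support, φ (f.coeff e') *
            ∑ x ∈ Fintype.piFinset T, ∏ i, (φ (x i)) ^ e' i * w i (x i) := by
          simp_rw [expand, Finset.mul_sum (R := F)]
          rw [Finset.sum_comm]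
          refine Finset.sum_congr rfl fun e' _ => ?_
          refine Finset.sum_congr rfl fun x _ => ?_
          rw [Finset.prod_mul_distrib]
          ring
      _ = ∑ e' ∈ f.support, φ (f.coeff e') *
            ∏ i, ∑ t ∈ T i, (φ t) ^ e' i * w i t := by
          refine Finset.sum_congr rfl fun e' _ => ?_
          rw [Finset.prod_univ_sum]
      _ = φ (f.coeff e) := by
          rw [Finset.sum_eq_single e]
          · have : ∀ i, ∑ t ∈ T i, (φ t) ^ e i * w i t = 1 := by
              intro i; rw [key i (e i) (hed i)]; simp
            simp [this]
          · intro e' he' hne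
            obtain ⟨i, hi1, hi2⟩ := by
              have := hlead e' he' hne
              push_neg at this
              exact this
            have : ∑ t ∈ T i, (φ t) ^ e' i * w i t = 0 := by
              rw [key i (e' i) hi2]; simp [hi1]
            rw [Finset.prod_eq_zero (Finset.mem_univ i) this, mul_zero]
          · intro habs; exact absurd he habs
  have hzero : ∑ x ∈ Fintype.piFinset T,
      (∏ i, w i (x i)) * MvPolynomial.eval₂ φ (fun i => φ (x i)) f = 0 :=
    Finset.sum_eq_zero fun x hx => by rw [hz x hx, mul_zero]
  rw [hzero] at hN
  exact (MvPolynomial.mem_support_iff.mp he) (hinj (by rw [← hN, map_zero]))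
end

section
/- Successively largest sequences satisfy Schauz's condition. Let K be a commutative integral domain, f a polynomial in n variables over K, and e = (e_1,…,e_n) a monomial of f. For j = 1,…,n let d_j be the maximum of a_j over all monomials a of f satisfying a_i = e_i for all i < j. Then e_i ≤ d_i for all i, and f contains no monomial e′ ≠ e such that for every i = 1,…,n either e′_i = e_i or e′_i > d_i. -/
/-- Successively largest sequences satisfy Schauz's condition. -/
theorem successively_largest_satisfies_schauz
    {K : Type*} [CommRing K] [IsDomain K] {n : ℕ}
    (f : MvPolynomial (Fin n) K) (e : Fin n →₀ ℕ)
    (he : e ∈ f.support) (d : Fin n → ℕ)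
    (hd : ∀ j, d j =
      ((f.support.filter fun a => ∀ i, i < j → a i = e i).sup fun a => a j)) :
    (∀ i, e i ≤ d i) ∧
      ∀ e' ∈ f.support, e' ≠ e → ¬ (∀ i, e' i = e i ∨ d i < e' i) := by
  constructor
  · intro i
    rw [hd i]
    exact Finset.le_sup (f := fun a : Fin n →₀ ℕ => a i)
      (Finset.mem_filter.mpr ⟨he, fun _ _ => rfl⟩)
  · intro e' he' hne h
    have hex : ∃ j, e' j ≠ e j := by
      by_contra hc
      push_neg at hc
      exact hne (Finsupp.ext hc)
    set s := Finset.univ.filter fun i => e' i ≠ e i with hs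
    have hsne : s.Nonempty := ⟨hex.choose, by simp [hs, hex.choose_spec]⟩
    set j := s.min' hsne with hjdef
    have hjmem : e' j ≠ e j := by
      have := s.min'_mem hsne
      simpa [hs] using this
    have hlt : ∀ i, i < j → e' i = e i := by
      intro i hi
      by_contra hc
      exact absurd (s.min'_le i (by simp [hs, hc])) (not_le.mpr hi)
    have hmem : e' ∈ f.support.filter fun a => ∀ i, i < j → a i = e i :=
      Finset.mem_filter.mpr ⟨he', hlt⟩
    have hle : e' j ≤ d j := by
      rw [hd j]
      exact Finset.le_sup (f := fun a : Fin n →₀ ℕ => a j) hmem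
    rcases h j with h1 | h2
    · exact hjmem h1
    · exact absurd hle (not_le.mpr h2)
end

section
/- Generalized Alon–Füredi Theorem. Let K be a commutative integral domain, f a nonzero polynomial in n variables over K of total degree exactly d whose degree in each variable x_i is at most d_i, and let S_1,…,S_n be finite subsets of K with d_i < |S_i| for all i. Let N be any natural number such that every tuple (y_1,…,y_n) of natural numbers with |S_i| − d_i ≤ y_i ≤ |S_i| for all i and y_1 + ⋯ + y_n = |S_1| + ⋯ + |S_n| − d satisfies y_1 y_2 ⋯ y_n ≥ N. Then the number of tuples (x_1,…,x_n) ∈ S_1 × ⋯ × S_n with f(x_1,…,x_n) ≠ 0 is at least N. -/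
lemma af_exists_between : ∀ (n : ℕ) (l y : Fin n → ℕ), (∀ i, l i ≤ y i) →
    ∀ t : ℕ, (∑ i, l i) ≤ t → t ≤ ∑ i, y i →
    ∃ z : Fin n → ℕ, (∀ i, l i ≤ z i ∧ z i ≤ y i) ∧ ∑ i, z i = t := by
  intro n
  induction n with
  | zero =>
    intro l y _ t h1 h2
    simp only [Finset.univ_eq_empty, Finset.sum_empty] at h1 h2 ⊢
    exact ⟨l, fun i => i.elim0, by omega⟩
  | succ n ih =>
    intro l y hly t h1 h2
    rw [Fin.sum_univ_succ] at h1 h2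
    have hl0 : l 0 ≤ y 0 := hly 0
    have hly' : ∑ i : Fin n, l i.succ ≤ ∑ i : Fin n, y i.succ :=
      Finset.sum_le_sum fun i _ => hly i.succ
    obtain ⟨z₀, hge1, hge2, hz₀y, hz₀t, heq⟩ : ∃ z₀, l 0 ≤ z₀ ∧
        t - ∑ i, y (Fin.succ i) ≤ z₀ ∧ z₀ ≤ y 0 ∧ z₀ ≤ t ∧
        (z₀ = l 0 ∨ z₀ = t - ∑ i, y (Fin.succ i)) := by
      refine ⟨max (l 0) (t - ∑ i, y (Fin.succ i)), ?_, ?_, ?_, ?_, max_choice _ _⟩ <;> omega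
    obtain ⟨z', hz', hz'sum⟩ := ih (fun i => l i.succ) (fun i => y i.succ)
      (fun i => hly i.succ) (t - z₀)
      (show ∑ i : Fin n, l i.succ ≤ t - z₀ by rcases heq with h | h <;> omega)
      (show t - z₀ ≤ ∑ i : Fin n, y i.succ by omega)
    refine ⟨Fin.cons z₀ z', fun i => ?_, ?_⟩
    · refine Fin.cases ?_ (fun j => ?_) i
      · simp only [Fin.cons_zero]
        exact ⟨hge1, hz₀y⟩
      · simpa using hz' j
    · rw [Fin.sum_univ_succ]
      simp only [Fin.cons_zero, Fin.cons_succ]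
      have : ∑ i, z' i = t - z₀ := hz'sum
      omega

lemma af_tdeg_le {K : Type*} [CommRing K] {n : ℕ} (f : MvPolynomial (Fin n) K) :
    f.totalDegree ≤ ∑ i, f.degreeOf i := by
  rw [MvPolynomial.totalDegree]
  apply Finset.sup_le
  intro a ha
  rw [Finsupp.sum_fintype _ _ (fun _ => rfl)]
  exact Finset.sum_le_sum fun i _ => by
    rw [MvPolynomial.degreeOf_eq_sup]; exact Finset.le_sup (f := fun s => s i) ha

lemma af_aux {K : Type*} [CommRing K] [IsDomain K] [DecidableEq K] :
    ∀ (n : ℕ) (f : MvPolynomial (Fin n) K), f ≠ 0 → ∀ (S : Fin n → Finset K) (di : Fin n → ℕ),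
    (∀ i, f.degreeOf i ≤ di i) → (∀ i, di i < (S i).card) →
    ∀ N : ℕ, (∀ y : Fin n → ℕ,
      (∀ i, (S i).card - di i ≤ y i ∧ y i ≤ (S i).card) →
      (∑ i, y i) = (∑ i, (S i).card) - f.totalDegree →
      N ≤ ∏ i, y i) →
    N ≤ ((Fintype.piFinset S).filter fun x => MvPolynomial.eval x f ≠ 0).card := by
  intro n
  induction n with
  | zero =>
    intro f hf S di hdi hS N hN
    obtain ⟨c, rfl⟩ := MvPolynomial.C_surjective (Fin 0) f
    have hc : c ≠ 0 := fun h => hf (by rw [h, map_zero])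
    have h1 : N ≤ 1 := by
      have := hN (fun i => i.elim0) (fun i => i.elim0) (by simp)
      simpa using this
    refine h1.trans ?_
    rw [Finset.filter_true_of_mem (fun x _ => by simpa using hc)]
    simp
  | succ n ih =>
    intro f hf S di hdi hS N hN
    set F := MvPolynomial.finSuccEquiv K n f with hF
    have hFne : F ≠ 0 := fun h => hf ((map_eq_zero_iff _ (AlgEquiv.injective _)).mp h)
    set e := f.degreeOf 0 with he
    have hdegF : F.natDegree = e := MvPolynomial.natDegree_finSuccEquiv f
    set g := F.coeff e with hg
    have hgne : g ≠ 0 := by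
      rw [hg, ← hdegF]
      exact Polynomial.leadingCoeff_ne_zero.mpr hFne
    set S' : Fin n → Finset K := fun j => S j.succ with hS'def
    set di' : Fin n → ℕ := fun j => di j.succ with hdi'def
    have hdg : ∀ j, g.degreeOf j ≤ di' j := fun j =>
      (MvPolynomial.degreeOf_coeff_finSuccEquiv f j e).trans (hdi j.succ)
    have hSd' : ∀ j, di' j < (S' j).card := fun j => hS j.succ
    set T := (Fintype.piFinset S').filter (fun x' => MvPolynomial.eval x' g ≠ 0) with hT
    set c := T.card with hc
    set m := (S 0).card - e with hm
    have hm1 : 1 ≤ m := by have := hS 0; have := hdi 0; omega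
    have htd : g.totalDegree + e ≤ f.totalDegree :=
      MvPolynomial.totalDegree_coeff_finSuccEquiv_add_le f e hgne
    have htdg : g.totalDegree ≤ ∑ j, di' j :=
      (af_tdeg_le g).trans (Finset.sum_le_sum fun j _ => hdg j)
    have htdf : f.totalDegree ≤ ∑ i, di i :=
      (af_tdeg_le f).trans (Finset.sum_le_sum fun i _ => hdi i)
    -- step 1: N ≤ c * m
    have hNcm : N ≤ c * m := by
      by_contra hlt
      push_neg at hlt
      have : c + 1 ≤ c := by
        refine ih g hgne S' di' hdg hSd' (c + 1) ?_
        intro y' hy' hsum'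
        -- build extended tuple
        set Y : Fin (n + 1) → ℕ := Fin.cons m y' with hY
        set L : Fin (n + 1) → ℕ := fun i => (S i).card - di i with hL
        have hLY : ∀ i, L i ≤ Y i := by
          intro i
          refine Fin.cases ?_ (fun j => ?_) i
          · simp only [hY, Fin.cons_zero, hL]
            have := hdi 0; omega
          · simp only [hY, Fin.cons_succ, hL]
            exact (hy' j).1
        have hsumS : ∑ i, (S i).card = (S 0).card + ∑ j, (S' j).card := by
          rw [Fin.sum_univ_succ]
        have hsumdi : ∑ i, di i = di 0 + ∑ j, di' j := by
          rw [Fin.sum_univ_succ]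
        have hdicard : ∀ i, di i ≤ (S i).card := fun i => (hS i).le
        have hsumL : ∑ i, L i = ∑ i, (S i).card - ∑ i, di i := by
          simp only [hL]
          rw [eq_comm, Nat.sub_eq_iff_eq_add (Finset.sum_le_sum fun i _ => hdicard i),
            ← Finset.sum_add_distrib]
          exact Finset.sum_congr rfl fun i _ => by have := hdicard i; omega
        have hsumY : ∑ i, Y i = m + ∑ j, y' j := by
          rw [Fin.sum_univ_succ]
          simp [hY]
        have hgS' : g.totalDegree ≤ ∑ j, (S' j).card :=
          htdg.trans (Finset.sum_le_sum fun j _ => (hSd' j).le)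
        obtain ⟨z, hz, hzsum⟩ := af_exists_between (n + 1) L Y hLY
          (∑ i, (S i).card - f.totalDegree)
          (by rw [hsumL]; omega)
          (by rw [hsumY, hsum']; have := hdi 0; have h0 := hS 0; omega)
        have hNz : N ≤ ∏ i, z i := hN z
          (fun i => ⟨(hz i).1, (hz i).2.trans (by
            refine Fin.cases ?_ (fun j => ?_) i
            · simp only [hY, Fin.cons_zero]; omega
            · simp only [hY, Fin.cons_succ]; exact (hy' j).2)⟩)
          hzsum
        have hprod : ∏ i, z i ≤ ∏ i, Y i :=
          Finset.prod_le_prod (fun i _ => Nat.zero_le _) (fun i _ => (hz i).2)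
        have hprodY : ∏ i, Y i = m * ∏ j, y' j := by
          rw [Fin.prod_univ_succ]; simp [hY]
        have : N ≤ m * ∏ j, y' j := by
          rw [← hprodY]; exact hNz.trans hprod
        -- m * (∏ y') > m * c
        by_contra hcon
        push_neg at hcon
        have : ∏ j, y' j ≤ c := by omega
        nlinarith
      omega
    refine hNcm.trans ?_
    -- step 2: c * m ≤ count
    have key : ∀ x' ∈ T, m ≤ ((S 0).filter fun a =>
        MvPolynomial.eval (Fin.cons a x' : Fin (n+1) → K) f ≠ 0).card := by
      intro x' hx'
      have hgx : MvPolynomial.eval x' g ≠ 0 := (Finset.mem_filter.mp hx').2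
      set P := Polynomial.map (MvPolynomial.eval x') F with hP
      have hPe : P.coeff e ≠ 0 := by
        rw [hP, Polynomial.coeff_map]; exact hgx
      have hPne : P ≠ 0 := fun h => hPe (by rw [h, Polynomial.coeff_zero])
      have hPdeg : P.natDegree ≤ e := hdegF ▸ Polynomial.natDegree_map_le
      have hzeros : ((S 0).filter fun a => Polynomial.eval a P = 0).card ≤ e := by
        have hsub : ((S 0).filter fun a => Polynomial.eval a P = 0) ⊆ P.roots.toFinset := by
          intro a ha
          rw [Multiset.mem_toFinset, Polynomial.mem_roots hPne]
          exact (Finset.mem_filter.mp ha).2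
        calc ((S 0).filter fun a => Polynomial.eval a P = 0).card
            ≤ P.roots.toFinset.card := Finset.card_le_card hsub
          _ ≤ Multiset.card P.roots := P.roots.toFinset_card_le
          _ ≤ P.natDegree := P.card_roots'
          _ ≤ e := hPdeg
      have heval : ∀ a, MvPolynomial.eval (Fin.cons a x' : Fin (n+1) → K) f
          = Polynomial.eval a P := fun a => MvPolynomial.eval_eq_eval_mv_eval' x' a f
      have hsplit := Finset.card_filter_add_card_filter_not
        (s := S 0) (p := fun a => Polynomial.eval a P = 0)
      have hrw : ((S 0).filter fun a =>
          MvPolynomial.eval (Fin.cons a x' : Fin (n+1) → K) f ≠ 0)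
          = ((S 0).filter fun a => ¬ Polynomial.eval a P = 0) := by
        apply Finset.filter_congr
        intro a _
        simp [heval a]
      rw [hrw]
      omega
    set B := T.biUnion (fun x' => ((S 0).filter fun a =>
      MvPolynomial.eval (Fin.cons a x' : Fin (n+1) → K) f ≠ 0).image
        (fun a => (Fin.cons a x' : Fin (n+1) → K))) with hB
    have hdisj : ∀ x₁ ∈ T, ∀ x₂ ∈ T, x₁ ≠ x₂ → Disjoint
        (((S 0).filter fun a => MvPolynomial.eval (Fin.cons a x₁ : Fin (n+1) → K) f ≠ 0).image
          (fun a => (Fin.cons a x₁ : Fin (n+1) → K)))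
        (((S 0).filter fun a => MvPolynomial.eval (Fin.cons a x₂ : Fin (n+1) → K) f ≠ 0).image
          (fun a => (Fin.cons a x₂ : Fin (n+1) → K))) := by
      intro x₁ _ x₂ _ hne
      rw [Finset.disjoint_left]
      rintro v hv1 hv2
      obtain ⟨a, _, rfl⟩ := Finset.mem_image.mp hv1
      obtain ⟨b, _, hab⟩ := Finset.mem_image.mp hv2
      apply hne
      have := congrArg Fin.tail hab
      simpa [Fin.tail_cons] using this.symm
    have hcard : c * m ≤ B.card := by
      rw [hB, Finset.card_biUnion hdisj]
      have : ∀ x' ∈ T, m ≤ (((S 0).filter fun a =>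
          MvPolynomial.eval (Fin.cons a x' : Fin (n+1) → K) f ≠ 0).image
            (fun a => (Fin.cons a x' : Fin (n+1) → K))).card := by
        intro x' hx'
        rw [Finset.card_image_of_injective _ (fun a b h => by simpa using congrFun h 0)]
        exact key x' hx'
      calc c * m = ∑ _x' ∈ T, m := by rw [Finset.sum_const, smul_eq_mul, hc]
        _ ≤ _ := Finset.sum_le_sum this
    refine hcard.trans (Finset.card_le_card ?_)
    intro v hv
    rw [hB] at hv
    obtain ⟨x', hx', hv⟩ := Finset.mem_biUnion.mp hv
    obtain ⟨a, ha, rfl⟩ := Finset.mem_image.mp hv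
    rw [Finset.mem_filter] at ha ⊢
    refine ⟨?_, ha.2⟩
    rw [Fintype.mem_piFinset]
    intro i
    refine Fin.cases ?_ (fun j => ?_) i
    · simpa using ha.1
    · simp only [Fin.cons_succ]
      exact Fintype.mem_piFinset.mp (Finset.mem_filter.mp hx').1 j

/-- Generalized Alon–Füredi Theorem. -/
theorem generalized_alon_furedi
    {K : Type*} [CommRing K] [IsDomain K] [DecidableEq K] {n : ℕ}
    (f : MvPolynomial (Fin n) K) (hf : f ≠ 0) (S : Fin n → Finset K)
    (d : ℕ) (hd : f.totalDegree = d)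
    (di : Fin n → ℕ) (hdi : ∀ i, f.degreeOf i ≤ di i)
    (hS : ∀ i, di i < (S i).card)
    (N : ℕ)
    (hN : ∀ y : Fin n → ℕ,
      (∀ i, (S i).card - di i ≤ y i ∧ y i ≤ (S i).card) →
      (∑ i, y i) = (∑ i, (S i).card) - d →
      N ≤ ∏ i, y i) :
    N ≤ ((Fintype.piFinset S).filter fun x => MvPolynomial.eval x f ≠ 0).card := by
  subst hd
  exact af_aux n f hf S di hdi hS N hN
end

section
/- Knuth's additive lower bound. Let K be a commutative integral domain, f a polynomial in n variables over K, and S_1,…,S_n finite subsets of K. If d = (d_1,…,d_n) is a maximal monomial of f and |S_i| > d_i for all i, then the number of tuples (x_1,…,x_n) ∈ S_1 × ⋯ × S_n with f(x_1,…,x_n) ≠ 0 is at least 1 + (|S_1| − (d_1+1)) + (|S_2| − (d_2+1)) + ⋯ + (|S_n| − (d_n+1)). -/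
open Polynomial Finsupp

section Phi

variable {K : Type*} [CommRing K] {σ : Type*}

/-- For a polynomial over a multivariate polynomial ring, extract for each power of `X`
the coefficient of a fixed monomial `m`. -/
noncomputable def knuthPhi (m : σ →₀ ℕ) (p : (MvPolynomial σ K)[X]) : K[X] :=
  p.sum fun j c => Polynomial.C (MvPolynomial.coeff m c) * Polynomial.X ^ j

lemma knuthPhi_coeff (m : σ →₀ ℕ) (p : (MvPolynomial σ K)[X]) (j : ℕ) :
    (knuthPhi m p).coeff j = MvPolynomial.coeff m (p.coeff j) := by
  classical
  rw [knuthPhi, Polynomial.sum, Polynomial.finset_sum_coeff]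
  simp only [Polynomial.coeff_C_mul, Polynomial.coeff_X_pow, mul_ite, mul_one, mul_zero]
  rw [Finset.sum_ite_eq p.support j (fun i => MvPolynomial.coeff m (p.coeff i))]
  split_ifs with h
  · rfl
  · rw [Polynomial.notMem_support_iff.mp h, MvPolynomial.coeff_zero]

lemma knuthPhi_add (m : σ →₀ ℕ) (p q : (MvPolynomial σ K)[X]) :
    knuthPhi m (p + q) = knuthPhi m p + knuthPhi m q := by
  ext k
  simp [knuthPhi_coeff, Polynomial.coeff_add]

lemma knuthPhi_map_C_mul (m : σ →₀ ℕ) (b : K[X]) (q : (MvPolynomial σ K)[X]) :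
    knuthPhi m (b.map MvPolynomial.C * q) = b * knuthPhi m q := by
  ext k
  rw [knuthPhi_coeff, Polynomial.coeff_mul, Polynomial.coeff_mul, MvPolynomial.coeff_sum]
  refine Finset.sum_congr rfl fun x _ => ?_
  rw [Polynomial.coeff_map, MvPolynomial.coeff_C_mul, knuthPhi_coeff]

lemma knuthPhi_degree_le (m : σ →₀ ℕ) (p : (MvPolynomial σ K)[X]) :
    (knuthPhi m p).degree ≤ p.degree := by
  rw [Polynomial.degree_le_iff_coeff_zero]
  intro k hk
  rw [knuthPhi_coeff, Polynomial.coeff_eq_zero_of_degree_lt hk, MvPolynomial.coeff_zero]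

lemma knuthPhi_modByMonic [Nontrivial K] (m : σ →₀ ℕ) {b : K[X]} (hb : b.Monic)
    (q : (MvPolynomial σ K)[X]) :
    knuthPhi m (q %ₘ b.map MvPolynomial.C) = (knuthPhi m q) %ₘ b := by
  have hbm : (b.map (MvPolynomial.C : K →+* MvPolynomial σ K)).Monic := hb.map _
  refine ((Polynomial.div_modByMonic_unique
      (knuthPhi m (q /ₘ b.map MvPolynomial.C))
      (knuthPhi m (q %ₘ b.map MvPolynomial.C)) hb ⟨?_, ?_⟩).2).symm
  · rw [← knuthPhi_map_C_mul, ← knuthPhi_add, Polynomial.modByMonic_add_div q _]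
  · calc (knuthPhi m (q %ₘ b.map MvPolynomial.C)).degree
        ≤ (q %ₘ b.map MvPolynomial.C).degree := knuthPhi_degree_le _ _
      _ < (b.map (MvPolynomial.C : K →+* MvPolynomial σ K)).degree :=
          Polynomial.degree_modByMonic_lt _ hbm
      _ = b.degree := hb.degree_map _

end Phi

section LemA

variable {K : Type*} [CommRing K] [IsDomain K] [DecidableEq K]

lemma knuth_exists_eval_ne_zero :
    ∀ (n : ℕ) (f : MvPolynomial (Fin n) K) (S : Fin n → Finset K) (d : Fin n →₀ ℕ),
      d ∈ f.support → (∀ a ∈ f.support, a ≠ d → ¬ (∀ i, d i ≤ a i)) →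
      (∀ i, d i < (S i).card) →
      ∃ x ∈ Fintype.piFinset S, MvPolynomial.eval x f ≠ 0 := by
  intro n
  induction n with
  | zero =>
    intro f S d hd hmax hS
    refine ⟨fun i => i.elim0, Fintype.mem_piFinset.mpr fun i => i.elim0, ?_⟩
    have hsupp : f.support = {d} :=
      Finset.eq_singleton_iff_unique_mem.mpr
        ⟨hd, fun x _ => Finsupp.ext fun i => i.elim0⟩
    rw [MvPolynomial.eval_eq, hsupp, Finset.sum_singleton]
    have hds : d.support = ∅ := by
      ext i; exact i.elim0
    rw [hds, Finset.prod_empty, mul_one]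
    exact MvPolynomial.mem_support_iff.mp hd
  | succ n IH =>
    intro f S d hd hmax hS
    classical
    set F := MvPolynomial.finSuccEquiv K n f with hF
    set b : K[X] := ∏ s ∈ S 0, (Polynomial.X - Polynomial.C s) with hbdef
    have hbmonic : b.Monic :=
      Polynomial.monic_prod_of_monic _ _ fun s _ => Polynomial.monic_X_sub_C s
    have hbdeg : b.natDegree = (S 0).card := by
      rw [hbdef, Polynomial.natDegree_prod_of_monic _ _
        (fun s _ => Polynomial.monic_X_sub_C s)]
      simp [Polynomial.natDegree_X_sub_C]
    set r := F %ₘ b.map MvPolynomial.C with hr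
    have hphi : ∀ m : Fin n →₀ ℕ, knuthPhi m r = (knuthPhi m F) %ₘ b :=
      fun m => knuthPhi_modByMonic m hbmonic F
    -- support transfer : monomials of r come from monomials of f with at least as
    -- large an exponent of the first variable
    have hsupp_r : ∀ (j : ℕ) (m : Fin n →₀ ℕ), MvPolynomial.coeff m (r.coeff j) ≠ 0 →
        ∃ j', j ≤ j' ∧ (Finsupp.cons j' m) ∈ f.support := by
      intro j m hjm
      have h1 : ((knuthPhi m F) %ₘ b).coeff j ≠ 0 := by
        rw [← hphi, knuthPhi_coeff]; exact hjm
      have hp0 : knuthPhi m F ≠ 0 := by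
        intro h0; rw [h0, Polynomial.zero_modByMonic] at h1
        exact h1 (Polynomial.coeff_zero j)
      refine ⟨(knuthPhi m F).natDegree, ?_, ?_⟩
      · by_contra hlt
        push_neg at hlt
        apply h1
        by_cases hc : (knuthPhi m F).degree < b.degree
        · rw [(Polynomial.modByMonic_eq_self_iff hbmonic).mpr hc]
          exact Polynomial.coeff_eq_zero_of_natDegree_lt hlt
        · push_neg at hc
          apply Polynomial.coeff_eq_zero_of_natDegree_lt
          calc ((knuthPhi m F) %ₘ b).natDegree
              ≤ b.natDegree := Polynomial.natDegree_modByMonic_le _ hbmonic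
            _ ≤ (knuthPhi m F).natDegree := Polynomial.natDegree_le_natDegree hc
            _ < j := hlt
      · rw [MvPolynomial.mem_support_iff, ← MvPolynomial.finSuccEquiv_coeff_coeff,
          ← knuthPhi_coeff]
        have hlc := Polynomial.leadingCoeff_ne_zero.mpr hp0
        rwa [Polynomial.leadingCoeff] at hlc
    -- the coefficient of `tail d` in `r.coeff (d 0)` is `coeff d f`
    have hPF : ∀ j' : ℕ, (knuthPhi (Finsupp.tail d) F).coeff j'
        = MvPolynomial.coeff (Finsupp.cons j' (Finsupp.tail d)) f := by
      intro j'
      rw [knuthPhi_coeff, MvPolynomial.finSuccEquiv_coeff_coeff]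
    have hco : ∀ j' : ℕ, d 0 < j' → (knuthPhi (Finsupp.tail d) F).coeff j' = 0 := by
      intro j' hj'
      rw [hPF]
      by_contra hne
      refine hmax _ (MvPolynomial.mem_support_iff.mpr hne) ?_ ?_
      · intro heq
        apply hj'.ne'
        have := congrArg (fun t : Fin (n + 1) →₀ ℕ => t 0) heq
        simpa [Finsupp.cons_zero] using this
      · intro i
        refine Fin.cases ?_ ?_ i
        · rw [Finsupp.cons_zero]; exact hj'.le
        · intro k; rw [Finsupp.cons_succ, Finsupp.tail_apply]
    have hPdeg : (knuthPhi (Finsupp.tail d) F).degree < b.degree := by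
      have h1 : (knuthPhi (Finsupp.tail d) F).degree ≤ ((d 0 : ℕ) : WithBot ℕ) := by
        rw [Polynomial.degree_le_iff_coeff_zero]
        intro k hk
        exact hco k (by exact_mod_cast hk)
      have h2 : ((d 0 : ℕ) : WithBot ℕ) < b.degree := by
        rw [Polynomial.degree_eq_natDegree hbmonic.ne_zero]
        exact_mod_cast (hbdeg ▸ hS 0)
      exact lt_of_le_of_lt h1 h2
    have hrd : MvPolynomial.coeff (Finsupp.tail d) (r.coeff (d 0)) = MvPolynomial.coeff d f := by
      rw [← knuthPhi_coeff, hphi, (Polynomial.modByMonic_eq_self_iff hbmonic).mpr hPdeg,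
        hPF, Finsupp.cons_tail]
    set g := r.coeff (d 0) with hg
    have hgd : Finsupp.tail d ∈ g.support := by
      rw [MvPolynomial.mem_support_iff, hrd]
      exact MvPolynomial.mem_support_iff.mp hd
    have hgmax : ∀ a ∈ g.support, a ≠ Finsupp.tail d → ¬ (∀ i, Finsupp.tail d i ≤ a i) := by
      intro a ha hane hle
      obtain ⟨j', hj'ge, hj'mem⟩ := hsupp_r (d 0) a (MvPolynomial.mem_support_iff.mp ha)
      refine hmax _ hj'mem ?_ ?_
      · intro heq
        apply hane
        have := congrArg Finsupp.tail heq
        rwa [Finsupp.tail_cons] at this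
      · intro i
        refine Fin.cases ?_ ?_ i
        · rw [Finsupp.cons_zero]; exact hj'ge
        · intro k
          rw [Finsupp.cons_succ]
          have := hle k
          rwa [Finsupp.tail_apply] at this
    obtain ⟨y, hy, hgy⟩ := IH g (fun i => S i.succ) (Finsupp.tail d) hgd hgmax
      (fun i => by rw [Finsupp.tail_apply]; exact hS i.succ)
    set p := r.map (MvPolynomial.eval y) with hp
    have hp0 : p.coeff (d 0) ≠ 0 := by
      rw [hp, Polynomial.coeff_map]; exact hgy
    have hpne : p ≠ 0 := fun h => hp0 (by rw [h, Polynomial.coeff_zero])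
    have hr0 : r ≠ 0 := by
      intro h
      apply hp0
      rw [hp, h, Polynomial.map_zero, Polynomial.coeff_zero]
    have hpdeg : p.natDegree < (S 0).card := by
      have h1 : p.natDegree ≤ r.natDegree := Polynomial.natDegree_map_le
      have h2 : r.degree < (b.map (MvPolynomial.C : K →+* MvPolynomial (Fin n) K)).degree :=
        Polynomial.degree_modByMonic_lt _ (hbmonic.map _)
      have h3 : r.natDegree < (b.map (MvPolynomial.C : K →+* MvPolynomial (Fin n) K)).natDegree :=
        Polynomial.natDegree_lt_natDegree hr0 h2
      rw [hbmonic.natDegree_map, hbdeg] at h3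
      omega
    have hex : ∃ s ∈ S 0, Polynomial.eval s p ≠ 0 := by
      by_contra hall
      push_neg at hall
      have hsub : S 0 ⊆ p.roots.toFinset := by
        intro s hs
        rw [Multiset.mem_toFinset, Polynomial.mem_roots hpne]
        exact hall s hs
      have hc1 := Finset.card_le_card hsub
      have hc2 := Multiset.toFinset_card_le p.roots
      have hc3 := Polynomial.card_roots' p
      omega
    obtain ⟨s, hs, hps⟩ := hex
    refine ⟨Fin.cons s y, ?_, ?_⟩
    · rw [Fintype.mem_piFinset]
      intro i
      refine Fin.cases ?_ ?_ i
      · rw [Fin.cons_zero]; exact hs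
      · intro k
        rw [Fin.cons_succ]
        exact Fintype.mem_piFinset.mp hy k
    · rw [MvPolynomial.eval_eq_eval_mv_eval', ← hF]
      have hFdecomp : F %ₘ (b.map MvPolynomial.C)
          + (b.map MvPolynomial.C) * (F /ₘ (b.map MvPolynomial.C)) = F :=
        Polynomial.modByMonic_add_div F _
      rw [← hFdecomp, Polynomial.map_add, Polynomial.map_mul, Polynomial.eval_add,
        Polynomial.eval_mul]
      have hb0 : Polynomial.eval s
          ((b.map (MvPolynomial.C : K →+* MvPolynomial (Fin n) K)).map
            (MvPolynomial.eval y)) = 0 := by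
        rw [Polynomial.map_map]
        have hcomp : (MvPolynomial.eval y).comp (MvPolynomial.C : K →+* MvPolynomial (Fin n) K)
            = RingHom.id K := by
          ext k
          simp
        rw [hcomp, Polynomial.map_id, hbdef, Polynomial.eval_prod]
        apply Finset.prod_eq_zero hs
        simp
      rw [hb0, zero_mul, add_zero]
      exact hps

end LemA

/-- Knuth's additive lower bound. -/
theorem knuth_additive_lower_bound
    {K : Type*} [CommRing K] [IsDomain K] [DecidableEq K] {n : ℕ}
    (f : MvPolynomial (Fin n) K) (S : Fin n → Finset K) (d : Fin n →₀ ℕ)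
    (hd : d ∈ f.support)
    (hmax : ∀ a ∈ f.support, a ≠ d → ¬ (∀ i, d i ≤ a i))
    (hS : ∀ i, d i < (S i).card) :
    1 + ∑ i, ((S i).card - (d i + 1)) ≤
      ((Fintype.piFinset S).filter fun x => MvPolynomial.eval x f ≠ 0).card := by
  classical
  suffices H : ∀ (M : ℕ) (S : Fin n → Finset K), (∀ i, d i < (S i).card) →
      (∑ i, ((S i).card - (d i + 1))) = M →
      1 + M ≤ ((Fintype.piFinset S).filter fun x => MvPolynomial.eval x f ≠ 0).card from
    H _ S hS rfl
  intro M
  induction M with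
  | zero =>
    intro S hSc _
    obtain ⟨x, hx, hfx⟩ := knuth_exists_eval_ne_zero n f S d hd hmax hSc
    have hmem : x ∈ (Fintype.piFinset S).filter fun z => MvPolynomial.eval z f ≠ 0 :=
      Finset.mem_filter.mpr ⟨hx, hfx⟩
    have := Finset.card_pos.mpr ⟨x, hmem⟩
    omega
  | succ M ih =>
    intro S hSc hsum
    have hex : ∃ i₀, 0 < (S i₀).card - (d i₀ + 1) := by
      by_contra h
      push_neg at h
      have : ∑ i, ((S i).card - (d i + 1)) = 0 :=
        Finset.sum_eq_zero fun i _ => Nat.le_zero.mp (h i)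
      omega
    obtain ⟨i₀, hi₀⟩ := hex
    obtain ⟨x, hx, hfx⟩ := knuth_exists_eval_ne_zero n f S d hd hmax hSc
    have hxi₀ : x i₀ ∈ S i₀ := Fintype.mem_piFinset.mp hx i₀
    set S' : Fin n → Finset K := Function.update S i₀ ((S i₀).erase (x i₀)) with hS'
    have hcard' : ∀ i, (S' i).card = if i = i₀ then (S i).card - 1 else (S i).card := by
      intro i
      by_cases h : i = i₀
      · subst h
        rw [hS', Function.update_self, Finset.card_erase_of_mem hxi₀, if_pos rfl]
      · rw [hS', Function.update_of_ne h, if_neg h]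
    have hSc' : ∀ i, d i < (S' i).card := by
      intro i
      rw [hcard' i]
      split_ifs with h
      · subst h; omega
      · exact hSc i
    have hsum' : ∑ i, ((S' i).card - (d i + 1)) = M := by
      have key : ∑ i, ((S' i).card - (d i + 1))
          = (∑ i ∈ Finset.univ.erase i₀, ((S i).card - (d i + 1)))
            + (((S i₀).card - 1) - (d i₀ + 1)) := by
        rw [← Finset.sum_erase_add _ _ (Finset.mem_univ i₀)]
        congr 1
        · refine Finset.sum_congr rfl fun i hi => ?_
          rw [hcard' i, if_neg (Finset.mem_erase.mp hi).1]
        · rw [hcard' i₀, if_pos rfl]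
      have key2 : ∑ i, ((S i).card - (d i + 1))
          = (∑ i ∈ Finset.univ.erase i₀, ((S i).card - (d i + 1)))
            + ((S i₀).card - (d i₀ + 1)) :=
        (Finset.sum_erase_add _ _ (Finset.mem_univ i₀)).symm
      rw [key2] at hsum
      rw [key]
      omega
    have hkey := ih S' hSc' hsum'
    have hxnot : x ∉ (Fintype.piFinset S').filter fun z => MvPolynomial.eval z f ≠ 0 := by
      intro hmem
      have := Fintype.mem_piFinset.mp (Finset.mem_filter.mp hmem).1 i₀
      rw [hS', Function.update_self] at this
      exact (Finset.mem_erase.mp this).1 rfl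
    have hsubset : insert x ((Fintype.piFinset S').filter fun z => MvPolynomial.eval z f ≠ 0)
        ⊆ (Fintype.piFinset S).filter fun z => MvPolynomial.eval z f ≠ 0 := by
      intro z hz
      rcases Finset.mem_insert.mp hz with rfl | hz
      · exact Finset.mem_filter.mpr ⟨hx, hfx⟩
      · obtain ⟨hz1, hz2⟩ := Finset.mem_filter.mp hz
        refine Finset.mem_filter.mpr ⟨?_, hz2⟩
        rw [Fintype.mem_piFinset] at hz1 ⊢
        intro i
        by_cases h : i = i₀
        · have h1 := hz1 i
          rw [hS'] at h1
          rw [h] at h1 ⊢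
          rw [Function.update_self] at h1
          exact Finset.erase_subset _ _ h1
        · have h1 := hz1 i
          rwa [hS', Function.update_of_ne h] at h1
    have hle := Finset.card_le_card hsubset
    rw [Finset.card_insert_of_notMem hxnot] at hle
    omega
end

section
/- Coefficient formula. Let F be a field, f a polynomial in n variables over F, and d = (d_1,…,d_n) an exponent vector such that every monomial a of f with a ≠ d satisfies a_i < d_i for some i (i.e., no monomial of f other than possibly d dominates d componentwise — this holds in particular when d is a maximal monomial of f). Let S_1,…,S_n be finite subsets of F with |S_i| = d_i + 1 for all i. Then the coefficient of x_1^{d_1}⋯x_n^{d_n} in f equals ∑_{(x_1,…,x_n) ∈ S_1 × ⋯ × S_n} f(x_1,…,x_n) · ∏_{i=1}^n (∏_{b ∈ S_i, b ≠ x_i} (x_i − b))⁻¹. -/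
open Polynomial Finset

lemma basis_leadingCoeff {F : Type*} [Field F] [DecidableEq F]
    (S : Finset F) (x : F) :
    (Lagrange.basis S id x).leadingCoeff = ∏ b ∈ S.erase x, (x - b)⁻¹ := by
  unfold Lagrange.basis
  rw [leadingCoeff_prod]
  refine Finset.prod_congr rfl fun b hb => ?_
  have hxb : x ≠ b := by
    rcases Finset.mem_erase.mp hb with ⟨h, _⟩
    exact fun hx => h (hx ▸ rfl)
  unfold Lagrange.basisDivisor
  rw [leadingCoeff_mul, leadingCoeff_C, leadingCoeff_X_sub_C, mul_one]
  rfl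

lemma single_var_sum {F : Type*} [Field F] [DecidableEq F]
    (S : Finset F) (m k : ℕ) (hcard : S.card = m + 1) (hk : k ≤ m) :
    ∑ x ∈ S, x ^ k * (∏ b ∈ S.erase x, (x - b))⁻¹ = if k = m then 1 else 0 := by
  have hinj : Set.InjOn (id : F → F) S := Function.injective_id.injOn
  have hdeg : (X ^ k : F[X]).degree < S.card := by
    rw [degree_X_pow, hcard]
    exact_mod_cast Nat.lt_succ_of_le hk
  have h := Lagrange.eq_interpolate hinj hdeg
  have hcoeff := congrArg (fun p => Polynomial.coeff p m) h
  simp only [Lagrange.interpolate_apply, Polynomial.finset_sum_coeff, coeff_X_pow,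
    coeff_C_mul] at hcoeff
  have hsum : ∑ x ∈ S, x ^ k * (∏ b ∈ S.erase x, (x - b))⁻¹
      = ∑ x ∈ S, eval (id x) (X ^ k) * (Lagrange.basis S id x).coeff m := by
    refine Finset.sum_congr rfl fun x hx => ?_
    have hnd : (Lagrange.basis S id x).natDegree = m := by
      rw [Lagrange.natDegree_basis hinj hx, hcard]; rfl
    have : (Lagrange.basis S id x).coeff m = ∏ b ∈ S.erase x, (x - b)⁻¹ := by
      rw [← hnd, Polynomial.coeff_natDegree, basis_leadingCoeff]
    rw [this, eval_pow, eval_X, Finset.prod_inv_distrib]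
    simp
  rw [hsum, ← hcoeff]
  simp [eq_comm]

/-- Coefficient formula. -/
theorem coefficient_formula
    {F : Type*} [Field F] [DecidableEq F] {n : ℕ}
    (f : MvPolynomial (Fin n) F) (d : Fin n →₀ ℕ)
    (hdom : ∀ a ∈ f.support, a ≠ d → ∃ i, a i < d i)
    (S : Fin n → Finset F) (hS : ∀ i, (S i).card = d i + 1) :
    f.coeff d =
      ∑ x ∈ Fintype.piFinset S,
        MvPolynomial.eval x f *
          ∏ i, (∏ b ∈ (S i).erase (x i), (x i - b))⁻¹ := by
  have heval : ∀ x : Fin n → F, MvPolynomial.eval x f =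
      ∑ a ∈ f.support, f.coeff a * ∏ i, x i ^ a i := fun x =>
    MvPolynomial.eval_eq' x f
  rw [Finset.sum_congr rfl (fun x _ => by rw [heval x, Finset.sum_mul]), Finset.sum_comm]
  have key : ∀ a ∈ f.support,
      (∑ x ∈ Fintype.piFinset S,
        f.coeff a * (∏ i, x i ^ a i) * ∏ i, (∏ b ∈ (S i).erase (x i), (x i - b))⁻¹)
      = f.coeff a * ∏ i, ∑ y ∈ S i, y ^ a i * (∏ b ∈ (S i).erase y, (y - b))⁻¹ := by
    intro a _
    rw [Finset.prod_univ_sum, Finset.mul_sum]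
    refine Finset.sum_congr rfl fun x hx => ?_
    rw [mul_assoc, ← Finset.prod_mul_distrib]
  rw [Finset.sum_congr rfl key]
  have hT : ∀ (i : Fin n) (k : ℕ), k ≤ d i →
      ∑ y ∈ S i, y ^ k * (∏ b ∈ (S i).erase y, (y - b))⁻¹ = if k = d i then 1 else 0 :=
    fun i k hk => single_var_sum (S i) (d i) k (hS i) hk
  by_cases hd : d ∈ f.support
  · rw [Finset.sum_eq_single_of_mem d hd]
    · rw [show (∏ i, ∑ y ∈ S i, y ^ d i * (∏ b ∈ (S i).erase y, (y - b))⁻¹) = 1 from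
        Finset.prod_eq_one fun i _ => by rw [hT i (d i) le_rfl, if_pos rfl], mul_one]
    · intro a ha hne
      obtain ⟨i, hi⟩ := hdom a ha hne
      rw [Finset.prod_eq_zero (Finset.mem_univ i), mul_zero]
      rw [hT i (a i) (le_of_lt hi), if_neg (Nat.ne_of_lt hi)]
  · rw [MvPolynomial.notMem_support_iff.mp hd]
    refine (Finset.sum_eq_zero fun a ha => ?_).symm
    have hne : a ≠ d := fun h => hd (h ▸ ha)
    obtain ⟨i, hi⟩ := hdom a ha hne
    rw [Finset.prod_eq_zero (Finset.mem_univ i), mul_zero]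
    rw [hT i (a i) (le_of_lt hi), if_neg (Nat.ne_of_lt hi)]
end
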